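/- arXiv:1603.03650 — 14 statements merged into one kernel-verified Lean document; each statement's English description precedes it below -/
import Mathlib

section
/- Let n ≥ 1 and γ ≥ 0. The function x ↦ (γ/2)·‖x‖₂² + P_γ(x) is convex on ℝⁿ; that is, the penalty P_γ is γ-weakly convex. -/
/-!
Expanding `(∑ |xᵢ|)² = ∑ xᵢ² + 2 ∑_{i<m} |xᵢ||xₘ|` shows that `(γ/2)‖x‖₂² + P_γ(x)` equals
`(γ/2)‖x‖₁² + ‖x‖₁`. The `ℓ¹` norm is convex and nonnegative, so its square is convex, and a
nonnegative combination of convex functions is convex.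
-/

open Finset

/-- The penalty `P_γ(x) = γ·(∑_{i<m} |x_i|·|x_m|) + ∑_i |x_i|` on `ℝⁿ`. -/
noncomputable def P (n : ℕ) (γ : ℝ) (x : Fin n → ℝ) : ℝ :=
  γ * (∑ i : Fin n, ∑ m ∈ Finset.Ioi i, |x i| * |x m|) + ∑ i : Fin n, |x i|

theorem sq_sum_eq_sum_sq_add_two_mul_sum_Ioi {ι R : Type*} [Fintype ι] [LinearOrder ι]
    [LocallyFiniteOrderTop ι] [LocallyFiniteOrderBot ι] [CommSemiring R] (a : ι → R) :
    (∑ i, a i) ^ 2 = ∑ i, a i ^ 2 + 2 * ∑ i, ∑ j ∈ Ioi i, a i * a j := by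
  classical
  have off_diag : 2 * ∑ i, ∑ j ∈ Ioi i, a i * a j = ∑ i, ∑ j ∈ {i}ᶜ, a i * a j := by
    rw [← sum_sum_Ioi_add_eq_sum_sum_off_diag fun j i => a i * a j, mul_sum]
    refine sum_congr rfl fun i _ => ?_
    rw [mul_sum]
    exact sum_congr rfl fun j _ => by ring
  rw [sq, Fintype.sum_mul_sum, off_diag, ← sum_add_distrib]
  exact sum_congr rfl fun i _ => by rw [sq, Fintype.sum_eq_add_sum_compl i]

theorem half_mul_sum_sq_add_P (n : ℕ) (γ : ℝ) (x : Fin n → ℝ) :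
    γ / 2 * ∑ i, x i ^ 2 + P n γ x = γ / 2 * (∑ i, |x i|) ^ 2 + ∑ i, |x i| := by
  simp only [P, sq_sum_eq_sum_sq_add_two_mul_sum_Ioi, sq_abs]
  ring

theorem convexOn_sum_abs {ι : Type*} [Fintype ι] :
    ConvexOn ℝ Set.univ fun x : ι → ℝ => ∑ i, |x i| := by
  simpa [Function.comp_def, PiLp.norm_eq_of_L1] using
    (convexOn_norm convex_univ).comp_linearMap (WithLp.linearEquiv 1 ℝ (ι → ℝ)).symm.toLinearMap

theorem P_weakly_convex_general (n : ℕ) (γ : ℝ) (hγ : 0 ≤ γ) :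
    ConvexOn ℝ Set.univ
      (fun x : Fin n → ℝ => γ / 2 * ∑ i : Fin n, (x i) ^ 2 + P n γ x) := by
  have sq_convex := (convexOn_sum_abs (ι := Fin n)).pow
    (fun x _ => sum_nonneg fun i _ => abs_nonneg (x i)) 2
  simp only [half_mul_sum_sq_add_P]
  exact (sq_convex.smul (div_nonneg hγ zero_le_two)).add convexOn_sum_abs

/-- `P_γ` is `γ`-weakly convex: `x ↦ (γ/2)·‖x‖₂² + P_γ(x)` is convex on `ℝⁿ`. -/
theorem P_weakly_convex (n : ℕ) (hn : 1 ≤ n) (γ : ℝ) (hγ : 0 ≤ γ) :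
    ConvexOn ℝ Set.univ
      (fun x : Fin n → ℝ => γ / 2 * ∑ i : Fin n, (x i) ^ 2 + P n γ x) :=
  P_weakly_convex_general n γ hγ
end

section
/- Let n ≥ 1, λ ≥ 0, γ ≥ 0 with λ·γ < 1, and let z ∈ ℝⁿ. Then the function x ↦ C_{λ,γ}(x|z) is strictly convex on ℝⁿ; consequently it has at most one minimizer. -/
open Finset

/-- The cost `C_{λ,γ}(x|z) = (1/2)·∑ (z_i − x_i)² + λ·P_γ(x)`. -/
noncomputable def C (n : ℕ) (lam γ : ℝ) (z x : Fin n → ℝ) : ℝ :=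
  (1 / 2) * ∑ i : Fin n, (z i - x i) ^ 2 + lam * P n γ x

/-- aux lemmas below -/
private lemma pen_key (n : ℕ) (a : Fin n → ℝ) :
    2 * (∑ i : Fin n, ∑ m ∈ Finset.Ioi i, a i * a m) = (∑ i, a i)^2 - ∑ i, (a i)^2 := by
  have h := Finset.sum_sum_Ioi_add_eq_sum_sum_off_diag (fun i j : Fin n => a i * a j)
  calc 2 * (∑ i : Fin n, ∑ m ∈ Finset.Ioi i, a i * a m)
      = ∑ i : Fin n, ∑ m ∈ Finset.Ioi i, (a m * a i + a i * a m) := by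
        rw [Finset.mul_sum]
        exact Finset.sum_congr rfl fun i _ => by
          rw [Finset.mul_sum]; exact Finset.sum_congr rfl fun m _ => by ring
    _ = ∑ i : Fin n, ((∑ j, a j) * a i - a i * a i) := by
        rw [h]
        refine Finset.sum_congr rfl fun i _ => ?_
        rw [← Finset.sum_compl_add_sum {i} a]
        simp [Finset.sum_mul, add_mul]
    _ = (∑ i, a i)^2 - ∑ i, (a i)^2 := by
        rw [Finset.sum_sub_distrib, ← Finset.mul_sum, sq]
        congr 1
        exact Finset.sum_congr rfl fun i _ => (sq (a i)).symm

private lemma sumsq_strict (n : ℕ) (c : ℝ) (hc : 0 < c) :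
    StrictConvexOn ℝ Set.univ (fun x : Fin n → ℝ => c * ∑ i, (x i)^2) := by
  refine ⟨convex_univ, ?_⟩
  intro x _ y hy hxy a b ha hb hab
  simp only [Pi.add_apply, Pi.smul_apply, smul_eq_mul]
  have key : ∑ i, (a * x i + b * y i)^2 < a * ∑ i, (x i)^2 + b * ∑ i, (y i)^2 := by
    rw [Finset.mul_sum, Finset.mul_sum, ← Finset.sum_add_distrib]
    obtain ⟨i, hi⟩ := Function.ne_iff.mp hxy
    refine Finset.sum_lt_sum (fun m _ => by nlinarith [sq_nonneg (x m - y m), mul_nonneg ha.le hb.le]) ⟨i, Finset.mem_univ i, ?_⟩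
    have h1 : 0 < (x i - y i)^2 :=
      lt_of_le_of_ne (sq_nonneg _) (Ne.symm (pow_ne_zero 2 (sub_ne_zero.mpr hi)))
    nlinarith [mul_pos ha hb]
  nlinarith [key]

private lemma abs_sum_convex (n : ℕ) :
    ConvexOn ℝ Set.univ (fun x : Fin n → ℝ => ∑ i, |x i|) := by
  refine ⟨convex_univ, ?_⟩
  intro x _ y _ a b ha hb hab
  simp only [Pi.add_apply, Pi.smul_apply, smul_eq_mul]
  rw [Finset.mul_sum, Finset.mul_sum, ← Finset.sum_add_distrib]
  refine Finset.sum_le_sum fun i _ => ?_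
  calc |a * x i + b * y i| ≤ |a * x i| + |b * y i| := abs_add_le _ _
    _ = a * |x i| + b * |y i| := by rw [abs_mul, abs_mul, abs_of_nonneg ha, abs_of_nonneg hb]

private lemma abs_sum_sq_convex (n : ℕ) (c : ℝ) (hc : 0 ≤ c) :
    ConvexOn ℝ Set.univ (fun x : Fin n → ℝ => c * (∑ i, |x i|)^2) := by
  refine ⟨convex_univ, ?_⟩
  intro x _ y _ a b ha hb hab
  have hS := (abs_sum_convex n).2 (Set.mem_univ x) (Set.mem_univ y) ha hb hab
  simp only [Pi.add_apply, Pi.smul_apply, smul_eq_mul] at hS ⊢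
  have h0 : 0 ≤ ∑ i, |a * x i + b * y i| := Finset.sum_nonneg fun i _ => abs_nonneg _
  have h1 : 0 ≤ ∑ i, |x i| := Finset.sum_nonneg fun i _ => abs_nonneg _
  have h2 : 0 ≤ ∑ i, |y i| := Finset.sum_nonneg fun i _ => abs_nonneg _
  have hq : (∑ i, |a * x i + b * y i|)^2 ≤ a * (∑ i, |x i|)^2 + b * (∑ i, |y i|)^2 := by
    nlinarith [sq_nonneg (∑ i, |x i| - ∑ i, |y i|), mul_nonneg ha hb,
      mul_le_mul hS hS h0 (by positivity : (0:ℝ) ≤ a * ∑ i, |x i| + b * ∑ i, |y i|)]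
  nlinarith [mul_le_mul_of_nonneg_left hq hc]

private lemma affine_convex (n : ℕ) (z : Fin n → ℝ) :
    ConvexOn ℝ Set.univ (fun x : Fin n → ℝ => ∑ i, ((z i)^2/2 - z i * x i)) := by
  refine ⟨convex_univ, ?_⟩
  intro x _ y _ a b ha hb hab
  simp only [Pi.add_apply, Pi.smul_apply, smul_eq_mul]
  rw [Finset.mul_sum, Finset.mul_sum, ← Finset.sum_add_distrib]
  refine le_of_eq (Finset.sum_congr rfl fun i _ => ?_)
  have : b = 1 - a := by linarith
  rw [this]; ring


/-- For `λ·γ < 1`, the cost `x ↦ C_{λ,γ}(x|z)` is strictly convex on `ℝⁿ`;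
consequently it has at most one minimizer. -/
theorem C_strictConvex (n : ℕ) (hn : 1 ≤ n) (lam γ : ℝ) (hlam : 0 ≤ lam) (hγ : 0 ≤ γ)
    (hlγ : lam * γ < 1) (z : Fin n → ℝ) :
    StrictConvexOn ℝ Set.univ (fun x : Fin n → ℝ => C n lam γ z x) ∧
      ∀ x₁ x₂ : Fin n → ℝ,
        (∀ x, C n lam γ z x₁ ≤ C n lam γ z x) →
        (∀ x, C n lam γ z x₂ ≤ C n lam γ z x) → x₁ = x₂ := by
  have heq : (fun x : Fin n → ℝ => C n lam γ z x) =
      (fun x : Fin n → ℝ => ((1 - lam * γ)/2) * ∑ i, (x i)^2) +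
      ((fun x : Fin n → ℝ => ∑ i, ((z i)^2/2 - z i * x i)) +
       ((fun x : Fin n → ℝ => (lam * γ / 2) * (∑ i, |x i|)^2) +
        (fun x : Fin n → ℝ => lam * ∑ i, |x i|))) := by
    funext x
    have hk := pen_key n (fun i => |x i|)
    simp only [sq_abs] at hk
    simp only [C, P, Pi.add_apply]
    have hexp : ∑ i : Fin n, (z i - x i)^2
        = ∑ i, (x i)^2 + 2 * ∑ i, ((z i)^2/2 - z i * x i) := by
      rw [Finset.mul_sum, ← Finset.sum_add_distrib]
      exact Finset.sum_congr rfl fun i _ => by ring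
    have hT : ∑ i : Fin n, ∑ m ∈ Finset.Ioi i, |x i| * |x m|
        = ((∑ i, |x i|)^2 - ∑ i, (x i)^2) / 2 := by linarith
    rw [hexp, hT]
    ring
  have hsc : StrictConvexOn ℝ Set.univ (fun x : Fin n → ℝ => C n lam γ z x) := by
    rw [heq]
    exact (sumsq_strict n _ (by linarith)).add_convexOn
      ((affine_convex n z).add ((abs_sum_sq_convex n _ (by positivity)).add
        ((abs_sum_convex n).smul hlam)))
  refine ⟨hsc, fun x₁ x₂ h1 h2 => ?_⟩
  exact hsc.eq_of_isMinOn (isMinOn_iff.mpr fun x _ => h1 x)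
    (isMinOn_iff.mpr fun x _ => h2 x) (Set.mem_univ _) (Set.mem_univ _)
end

section
/- Let λ ≥ 0, γ ≥ 0 with λ·γ < 1, let z ∈ ℝⁿ, and let x̂ ∈ ℝⁿ be a minimizer of x ↦ C_{λ,γ}(x|z). Then for every index i: if z_i ≥ 0 then 0 ≤ x̂_i ≤ z_i, and if z_i ≤ 0 then z_i ≤ x̂_i ≤ 0. -/
open Finset

lemma P_mono (n : ℕ) (γ : ℝ) (hγ : 0 ≤ γ) (x x' : Fin n → ℝ)
    (h : ∀ j, |x' j| ≤ |x j|) : P n γ x' ≤ P n γ x := by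
  unfold P
  refine add_le_add (mul_le_mul_of_nonneg_left ?_ hγ) (Finset.sum_le_sum fun i _ => h i)
  refine Finset.sum_le_sum fun i _ => Finset.sum_le_sum fun m _ => ?_
  exact mul_le_mul (h i) (h m) (abs_nonneg _) (abs_nonneg _)

lemma key (n : ℕ) (lam γ : ℝ) (hlam : 0 ≤ lam) (hγ : 0 ≤ γ) (z xh : Fin n → ℝ)
    (hmin : ∀ x, C n lam γ z xh ≤ C n lam γ z x) (i : Fin n) (y : ℝ)
    (hy : |y| ≤ |xh i|) (hq : (z i - y) ^ 2 < (z i - xh i) ^ 2) : False := by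
  set x' := Function.update xh i y with hx'
  have habs : ∀ j, |x' j| ≤ |xh j| := by
    intro j
    by_cases hj : j = i
    · subst hj; simp [hx', hy]
    · simp [hx', Function.update_of_ne hj]
  have hP : P n γ x' ≤ P n γ xh := P_mono n γ hγ xh x' habs
  have hsum : ∑ j : Fin n, (z j - x' j) ^ 2 < ∑ j : Fin n, (z j - xh j) ^ 2 := by
    refine Finset.sum_lt_sum (fun j _ => ?_) ⟨i, Finset.mem_univ i, by simpa [hx'] using hq⟩
    by_cases hj : j = i
    · subst hj; simpa [hx'] using hq.le
    · simp [hx', Function.update_of_ne hj]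
  have : C n lam γ z x' < C n lam γ z xh := by
    unfold C
    have := mul_le_mul_of_nonneg_left hP hlam
    nlinarith
  exact absurd (hmin x') (not_le.mpr this)

/-- Prop. 2(a): the minimizer shrinks each coordinate of `z` towards zero. -/
theorem thold_shrinks (n : ℕ) (lam γ : ℝ) (hlam : 0 ≤ lam) (hγ : 0 ≤ γ)
    (hlγ : lam * γ < 1) (z xh : Fin n → ℝ)
    (hmin : ∀ x, C n lam γ z xh ≤ C n lam γ z x) :
    ∀ i : Fin n,
      (0 ≤ z i → 0 ≤ xh i ∧ xh i ≤ z i) ∧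
      (z i ≤ 0 → z i ≤ xh i ∧ xh i ≤ 0) := by
  intro i
  constructor
  · intro hz
    constructor
    · by_contra h
      push_neg at h
      refine key n lam γ hlam hγ z xh hmin i 0 (by simp) ?_
      nlinarith
    · by_contra h
      push_neg at h
      refine key n lam γ hlam hγ z xh hmin i (z i) ?_ ?_
      · rw [abs_of_nonneg hz, abs_of_nonneg (by linarith)]; linarith
      · nlinarith
  · intro hz
    constructor
    · by_contra h
      push_neg at h
      refine key n lam γ hlam hγ z xh hmin i (z i) ?_ ?_
      · rw [abs_of_nonpos hz, abs_of_nonpos (by linarith)]; linarith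
      · nlinarith
    · by_contra h
      push_neg at h
      refine key n lam γ hlam hγ z xh hmin i 0 (by simp) ?_
      nlinarith
end

section
/- Let λ ≥ 0, γ ≥ 0 with λ·γ < 1, let z ∈ ℝⁿ, and let x̂ ∈ ℝⁿ be a minimizer of x ↦ C_{λ,γ}(x|z). Then for all indices i, m: if |z_i| > |z_m| then |x̂_i| ≥ |x̂_m|. -/
open Finset

lemma Q_eq (n : ℕ) (a : Fin n → ℝ) :
    ∑ i : Fin n, ∑ m ∈ Finset.Ioi i, a i * a m
      = ((∑ i : Fin n, a i)^2 - ∑ i : Fin n, (a i)^2) / 2 := by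
  have hsq : (∑ i : Fin n, a i)^2 = ∑ i : Fin n, ∑ j : Fin n, a i * a j := by
    rw [sq, Finset.sum_mul_sum]
  have hIio : ∑ i : Fin n, ∑ j ∈ Iio i, a i * a j
      = ∑ i : Fin n, ∑ m ∈ Ioi i, a i * a m := by
    rw [Finset.sum_comm' (s' := fun y => Ioi y) (t' := univ)
      (by intro x y; simp [mem_Iio, mem_Ioi])]
    simp [mul_comm]
  have hsplit : ∀ i : Fin n, ∑ j : Fin n, a i * a j
      = (a i)^2 + ∑ j ∈ Ioi i, a i * a j + ∑ j ∈ Iio i, a i * a j := by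
    intro i
    have : (univ : Finset (Fin n)) = insert i (Ioi i ∪ Iio i) := by
      ext j
      simp only [mem_insert, mem_union, mem_Ioi, mem_Iio, mem_univ, true_iff]
      omega
    rw [this, Finset.sum_insert (by simp), Finset.sum_union (by
      rw [Finset.disjoint_left]; intro j hj hj'; simp at hj hj'; omega)]
    ring
  rw [eq_div_iff (by norm_num)]
  rw [hsq]
  simp only [hsplit]
  rw [Finset.sum_add_distrib, Finset.sum_add_distrib, hIio]
  ring

/-- Prop. 2(b): the minimizer preserves strict ordering of magnitudes. -/
theorem thold_monotone (n : ℕ) (lam γ : ℝ) (hlam : 0 ≤ lam) (hγ : 0 ≤ γ)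
    (hlγ : lam * γ < 1) (z xh : Fin n → ℝ)
    (hmin : ∀ x, C n lam γ z xh ≤ C n lam γ z x) :
    ∀ i m : Fin n, |z i| > |z m| → |xh i| ≥ |xh m| := by
  intro i m hzi
  by_contra hlt
  push_neg at hlt
  have him : i ≠ m := by rintro rfl; exact lt_irrefl _ hzi
  set si : ℝ := if 0 ≤ z i then 1 else -1 with hsi_def
  set sm : ℝ := if 0 ≤ z m then 1 else -1 with hsm_def
  set x : Fin n → ℝ :=
    fun j => if j = i then si * |xh m| else if j = m then sm * |xh i| else xh j with hx_def
  have hxi : x i = si * |xh m| := by simp [hx_def]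
  have hxm : x m = sm * |xh i| := by simp [hx_def, him, Ne.symm him]
  have hsi_abs : |si| = 1 := by rw [hsi_def]; split_ifs <;> simp
  have hsm_abs : |sm| = 1 := by rw [hsm_def]; split_ifs <;> simp
  have hsi_mul : si * z i = |z i| := by
    rw [hsi_def]; split_ifs with h
    · simp [abs_of_nonneg h]
    · simp [abs_of_neg (lt_of_not_ge h)]
  have hsm_mul : sm * z m = |z m| := by
    rw [hsm_def]; split_ifs with h
    · simp [abs_of_nonneg h]
    · simp [abs_of_neg (lt_of_not_ge h)]
  have habs : ∀ j, |x j| = |xh (Equiv.swap i m j)| := by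
    intro j
    by_cases hji : j = i
    · subst hji; rw [hxi, abs_mul, hsi_abs, one_mul, Equiv.swap_apply_left, abs_abs]
    · by_cases hjm : j = m
      · subst hjm; rw [hxm, abs_mul, hsm_abs, one_mul, Equiv.swap_apply_right, abs_abs]
      · rw [Equiv.swap_apply_of_ne_of_ne hji hjm]
        simp [hx_def, hji, hjm]
  have hsum : ∑ j : Fin n, |x j| = ∑ j : Fin n, |xh j| := by
    calc ∑ j : Fin n, |x j| = ∑ j : Fin n, |xh (Equiv.swap i m j)| :=
          Finset.sum_congr rfl (fun j _ => habs j)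
      _ = ∑ j : Fin n, |xh j| := Fintype.sum_equiv (Equiv.swap i m) _ _ (fun j => rfl)
  have hsumsq : ∑ j : Fin n, |x j| ^ 2 = ∑ j : Fin n, |xh j| ^ 2 := by
    calc ∑ j : Fin n, |x j| ^ 2 = ∑ j : Fin n, |xh (Equiv.swap i m j)| ^ 2 :=
          Finset.sum_congr rfl (fun j _ => by rw [habs j])
      _ = ∑ j : Fin n, |xh j| ^ 2 := Fintype.sum_equiv (Equiv.swap i m) _ _ (fun j => rfl)
  have hP : P n γ x = P n γ xh := by
    unfold P
    rw [Q_eq n (fun j => |x j|), Q_eq n (fun j => |xh j|), hsum, hsumsq]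
  -- quadratic part strictly decreases
  have hzero : ∀ j, j ∉ ({i, m} : Finset (Fin n)) →
      (z j - x j)^2 - (z j - xh j)^2 = 0 := by
    intro j hj
    simp only [Finset.mem_insert, Finset.mem_singleton, not_or] at hj
    have : x j = xh j := by simp [hx_def, hj.1, hj.2]
    rw [this]; ring
  have hdiff : ∑ j : Fin n, ((z j - x j)^2 - (z j - xh j)^2)
      = ((z i - x i)^2 - (z i - xh i)^2) + ((z m - x m)^2 - (z m - xh m)^2) := by
    rw [← Finset.sum_subset (Finset.subset_univ ({i, m} : Finset (Fin n)))
      (fun j _ hj => hzero j hj)]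
    rw [Finset.sum_pair him]
  have hneg : ∑ j : Fin n, ((z j - x j)^2 - (z j - xh j)^2) < 0 := by
    rw [hdiff, hxi, hxm]
    have hsi_sq : si ^ 2 = 1 := by rw [← sq_abs, hsi_abs]; norm_num
    have hsm_sq : sm ^ 2 = 1 := by rw [← sq_abs, hsm_abs]; norm_num
    have h1 : z i * xh i ≤ |z i| * |xh i| := by
      rw [← abs_mul]; exact le_abs_self _
    have h2 : z m * xh m ≤ |z m| * |xh m| := by
      rw [← abs_mul]; exact le_abs_self _
    have h3 : 0 < (|z i| - |z m|) * (|xh m| - |xh i|) :=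
      mul_pos (sub_pos.mpr hzi) (sub_pos.mpr hlt)
    have hE : (z i - si * |xh m|)^2 - (z i - xh i)^2
        + ((z m - sm * |xh i|)^2 - (z m - xh m)^2)
        = 2*(z i * xh i + z m * xh m) - 2*(|z i| * |xh m| + |z m| * |xh i|) := by
      linear_combination (-2*|xh m|)*hsi_mul + (-2*|xh i|)*hsm_mul
        + |xh m|^2*hsi_sq + |xh i|^2*hsm_sq + sq_abs (xh m) + sq_abs (xh i)
    rw [hE]
    nlinarith [h1, h2, h3]
  have key : ∑ j : Fin n, (z j - x j)^2 < ∑ j : Fin n, (z j - xh j)^2 := by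
    rw [Finset.sum_sub_distrib] at hneg
    linarith
  have hC : C n lam γ z x < C n lam γ z xh := by
    unfold C
    rw [hP]
    linarith
  exact absurd (hmin x) (not_le.mpr hC)
end

section
/- Let λ ≥ 0, γ ≥ 0 with λ·γ < 1, let z ∈ ℝⁿ, and let x̂ ∈ ℝⁿ be a minimizer of x ↦ C_{λ,γ}(x|z). Then for all indices i, m: if |z_i| = |z_m| then |x̂_i| = |x̂_m|. -/
/-!
With `S x = ∑ |x i|`, the cost is
`C(x) = ½ ∑ (z i - x i)² - (λγ/2) ∑ x i² + (λγ/2) S(x)² + λ S(x)`,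
and since `S` is convex and nonnegative, `C` is `(1 - λγ)`-strongly convex, so its minimizer is
unique. `C(x | z)` is invariant under applying the same signed permutation to `x` and `z`. If
`z i = ε z m` with `ε = ±1`, the transposition of `i, m` combined with multiplication of both
coordinates by `ε` fixes `z`, so it fixes the minimizer, giving `x̂ i = ε x̂ m`.
-/

open Finset

lemma Finset.two_mul_sum_sum_Ioi_mul {α R : Type*} [Fintype α] [LinearOrder α]
    [LocallyFiniteOrderTop α] [LocallyFiniteOrderBot α] [CommRing R] (a : α → R) :
    2 * ∑ i, ∑ j ∈ Ioi i, a i * a j = (∑ i, a i) ^ 2 - ∑ i, a i ^ 2 := by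
  classical
  calc 2 * ∑ i, ∑ j ∈ Ioi i, a i * a j = ∑ i, ∑ j ∈ Ioi i, (a j * a i + a i * a j) := by
        simp_rw [mul_sum]
        exact sum_congr rfl fun i _ => sum_congr rfl fun j _ => by ring
    _ = ∑ i, ∑ j ∈ {i}ᶜ, a j * a i := sum_sum_Ioi_add_eq_sum_sum_off_diag fun j i => a j * a i
    _ = ∑ i, ((∑ j, a j) * a i - a i ^ 2) := sum_congr rfl fun i _ => by
        rw [← sum_mul, ← sum_compl_add_sum {i}, sum_singleton]; ring
    _ = (∑ i, a i) ^ 2 - ∑ i, a i ^ 2 := by rw [sum_sub_distrib, ← mul_sum, sq]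

lemma P_eq (n : ℕ) (γ : ℝ) (x : Fin n → ℝ) :
    P n γ x = γ / 2 * ((∑ i, |x i|) ^ 2 - ∑ i, x i ^ 2) + ∑ i, |x i| := by
  have h := two_mul_sum_sum_Ioi_mul fun i => |x i|
  simp only [sq_abs] at h
  rw [P, ← h]; ring

section SignedPermutation

variable {ι : Type*} [Fintype ι] (σ : Equiv.Perm ι) {s : ι → ℝ}

def signedPerm (s x : ι → ℝ) : ι → ℝ := fun j => s j * x (σ j)

lemma sum_abs_signedPerm (hs : ∀ j, |s j| = 1) (x : ι → ℝ) :
    ∑ j, |signedPerm σ s x j| = ∑ j, |x j| := by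
  simp only [signedPerm, abs_mul, hs, one_mul]
  exact Equiv.sum_comp σ fun j => |x j|

lemma sum_sq_sub_signedPerm (hs : ∀ j, |s j| = 1) (z x : ι → ℝ) :
    ∑ j, (signedPerm σ s z j - signedPerm σ s x j) ^ 2 = ∑ j, (z j - x j) ^ 2 := by
  have hs2 (j : ι) : s j ^ 2 = 1 := by rw [← sq_abs, hs, one_pow]
  simp only [signedPerm, ← mul_sub, mul_pow, hs2, one_mul]
  exact Equiv.sum_comp σ fun j => (z j - x j) ^ 2

lemma sum_sq_signedPerm (hs : ∀ j, |s j| = 1) (x : ι → ℝ) :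
    ∑ j, signedPerm σ s x j ^ 2 = ∑ j, x j ^ 2 := by
  simpa [signedPerm] using sum_sq_sub_signedPerm σ hs 0 x

end SignedPermutation

lemma C_signedPerm {n : ℕ} (lam γ : ℝ) (σ : Equiv.Perm (Fin n)) {s : Fin n → ℝ}
    (hs : ∀ j, |s j| = 1) (z x : Fin n → ℝ) :
    C n lam γ (signedPerm σ s z) (signedPerm σ s x) = C n lam γ z x := by
  rw [C, C, P_eq, P_eq, sum_sq_sub_signedPerm σ hs, sum_abs_signedPerm σ hs,
    sum_sq_signedPerm σ hs]

section Midpoint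

variable {ι : Type*} [Fintype ι]

lemma sum_sq_sub_midpoint (z x y : ι → ℝ) :
    ∑ j, (z j - (x j + y j) / 2) ^ 2
      = (∑ j, (z j - x j) ^ 2 + ∑ j, (z j - y j) ^ 2) / 2 - (∑ j, (x j - y j) ^ 2) / 4 := by
  rw [← sum_add_distrib, sum_div, sum_div, ← sum_sub_distrib]
  exact sum_congr rfl fun j _ => by ring

lemma sum_sq_midpoint (x y : ι → ℝ) :
    ∑ j, ((x j + y j) / 2) ^ 2
      = (∑ j, x j ^ 2 + ∑ j, y j ^ 2) / 2 - (∑ j, (x j - y j) ^ 2) / 4 := by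
  simpa using sum_sq_sub_midpoint 0 x y

lemma sum_abs_midpoint_le (x y : ι → ℝ) :
    ∑ j, |(x j + y j) / 2| ≤ (∑ j, |x j| + ∑ j, |y j|) / 2 := by
  rw [← sum_add_distrib, sum_div]
  gcongr with j
  rw [abs_div, abs_two]
  gcongr
  exact abs_add_le _ _

end Midpoint

lemma C_midpoint_le {n : ℕ} {lam γ : ℝ} (hlam : 0 ≤ lam) (hγ : 0 ≤ γ) (z x y : Fin n → ℝ) :
    C n lam γ z (fun j => (x j + y j) / 2)
      ≤ (C n lam γ z x + C n lam γ z y) / 2 - (1 - lam * γ) / 8 * ∑ j, (x j - y j) ^ 2 := by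
  set Sx := ∑ j, |x j|
  set Sy := ∑ j, |y j|
  have hS := sum_abs_midpoint_le x y
  have hS_nonneg : 0 ≤ ∑ j, |(x j + y j) / 2| := sum_nonneg fun j _ => abs_nonneg _
  have hS_sq : (∑ j, |(x j + y j) / 2|) ^ 2 ≤ (Sx ^ 2 + Sy ^ 2) / 2 :=
    calc (∑ j, |(x j + y j) / 2|) ^ 2 ≤ ((Sx + Sy) / 2) ^ 2 := pow_le_pow_left₀ hS_nonneg hS 2
      _ ≤ (Sx ^ 2 + Sy ^ 2) / 2 := by nlinarith [sq_nonneg (Sx - Sy)]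
  simp only [C, P_eq, sum_sq_sub_midpoint, sum_sq_midpoint]
  nlinarith [mul_le_mul_of_nonneg_left hS_sq (mul_nonneg hlam hγ),
    mul_le_mul_of_nonneg_left hS hlam]

lemma eq_of_C_le_of_isMinimizer {n : ℕ} {lam γ : ℝ} (hlam : 0 ≤ lam) (hγ : 0 ≤ γ)
    (hlγ : lam * γ < 1) {z xh y : Fin n → ℝ} (hmin : ∀ x, C n lam γ z xh ≤ C n lam γ z x)
    (hy : C n lam γ z y ≤ C n lam γ z xh) : y = xh := by
  have hmid := (hmin _).trans (C_midpoint_le hlam hγ z xh y)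
  have hD : ∑ j, (xh j - y j) ^ 2 ≤ 0 := by
    by_contra! hD
    nlinarith
  have hD0 := (sum_eq_zero_iff_of_nonneg fun j _ => sq_nonneg (xh j - y j)).mp
    (hD.antisymm (sum_nonneg fun j _ => sq_nonneg _))
  funext j
  linarith [pow_eq_zero_iff two_ne_zero |>.mp (hD0 j (mem_univ j))]

/-- Prop. 2(c): the minimizer treats equal-magnitude inputs equally. -/
theorem thold_equal (n : ℕ) (lam γ : ℝ) (hlam : 0 ≤ lam) (hγ : 0 ≤ γ)
    (hlγ : lam * γ < 1) (z xh : Fin n → ℝ)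
    (hmin : ∀ x, C n lam γ z xh ≤ C n lam γ z x) :
    ∀ i m : Fin n, |z i| = |z m| → |xh i| = |xh m| := by
  intro i m hz
  obtain ⟨ε, hε, hzi⟩ : ∃ ε : ℝ, |ε| = 1 ∧ z i = ε * z m := by
    rcases abs_eq_abs.mp hz with h | h
    exacts [⟨1, by simp, by simp [h]⟩, ⟨-1, by simp, by simp [h]⟩]
  have hzm : z m = ε * z i := by rw [hzi, ← mul_assoc, ← abs_mul_abs_self, hε, one_mul, one_mul]
  set s : Fin n → ℝ := fun j => if j = i ∨ j = m then ε else 1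
  have hs (j : Fin n) : |s j| = 1 := by
    simp only [s]; split_ifs <;> simp [hε]
  have hz_fixed : signedPerm (Equiv.swap i m) s z = z := by
    funext j
    by_cases hji : j = i
    · subst hji; simp [signedPerm, s, hzi]
    by_cases hjm : j = m
    · subst hjm; simp [signedPerm, s, hzm]
    · simp [signedPerm, s, hji, hjm, Equiv.swap_apply_of_ne_of_ne hji hjm]
  have hxh_fixed : signedPerm (Equiv.swap i m) s xh = xh :=
    eq_of_C_le_of_isMinimizer hlam hγ hlγ hmin <| by
      rw [← C_signedPerm lam γ (Equiv.swap i m) hs z xh, hz_fixed]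
  have hxi : ε * xh m = xh i := by simpa [signedPerm, s] using congrFun hxh_fixed i
  rw [← hxi, abs_mul, hε, one_mul]
end

section
/- Let λ ≥ 0, γ ≥ 0 with λ·γ < 1, and let z ∈ ℝⁿ satisfy z_1 ≥ z_2 ≥ … ≥ z_n ≥ 0. Let x̂ ∈ ℝⁿ be a minimizer of x ↦ C_{λ,γ}(x|z), and let k be the number of indices i with x̂_i ≠ 0. Then for every index i, x̂_i = (1 − λγ)^{−1} · max(z_i − h(k), 0). -/
open Finset

/-- The candidate thresholds `h(i) = (lam(1-lam*gamma) + lam*gamma*(z_1+...+z_i)) / (1+(i-1)lam*gamma)`. -/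
noncomputable def hfun (n : ℕ) (lam γ : ℝ) (z : Fin n → ℝ) (i : ℕ) : ℝ :=
  (lam * (1 - lam * γ) + lam * γ * ∑ m ∈ Finset.univ.filter (fun m : Fin n => (m : ℕ) < i), z m) /
    (1 + ((i : ℝ) - 1) * lam * γ)

lemma sum_comp_update {n : ℕ} (g : Fin n → ℝ → ℝ) (x : Fin n → ℝ) (i : Fin n) (s : ℝ) :
    ∑ j, g j (Function.update x i s j) = g i s + ∑ j ∈ Finset.univ \ {i}, g j (x j) := by
  have h : ∀ j, g j (Function.update x i s j)
      = Function.update (fun j => g j (x j)) i (g i s) j := by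
    intro j; rcases eq_or_ne j i with rfl | hne
    · simp
    · simp [Function.update_of_ne hne]
  rw [Finset.sum_congr rfl (fun j _ => h j), Finset.sum_update_of_mem (mem_univ i)]

lemma pairQ {n : ℕ} (a : Fin n → ℝ) :
    2 * (∑ i, ∑ m ∈ Ioi i, a i * a m) = (∑ i, a i) ^ 2 - ∑ i, (a i) ^ 2 := by
  have h := Finset.sum_sum_Ioi_add_eq_sum_sum_off_diag (fun j i : Fin n => a j * a i)
  have hL : ∑ i : Fin n, ∑ j ∈ Ioi i, ((fun j i : Fin n => a j * a i) j i
        + (fun j i : Fin n => a j * a i) i j)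
      = 2 * ∑ i : Fin n, ∑ j ∈ Ioi i, a i * a j := by
    rw [Finset.mul_sum]
    refine sum_congr rfl fun i _ => ?_
    rw [Finset.mul_sum]
    exact sum_congr rfl fun j _ => by ring
  have hR : ∑ i : Fin n, ∑ j ∈ ({i} : Finset (Fin n))ᶜ, a j * a i
      = (∑ i, a i) ^ 2 - ∑ i, (a i) ^ 2 := by
    have h1 : ∀ i : Fin n, ∑ j ∈ ({i} : Finset (Fin n))ᶜ, a j * a i
        = ((∑ j, a j) - a i) * a i := by
      intro i
      have h2 := Finset.sum_compl_add_sum ({i} : Finset (Fin n)) a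
      rw [Finset.sum_singleton] at h2
      rw [← Finset.sum_mul, show (∑ j ∈ ({i} : Finset (Fin n))ᶜ, a j) = (∑ j, a j) - a i by
        linarith]
    rw [Finset.sum_congr rfl fun i _ => h1 i]
    simp_rw [sub_mul]
    rw [Finset.sum_sub_distrib, ← Finset.mul_sum]
    simp_rw [← sq]
  rw [hL] at h
  rw [h]
  convert hR using 2 with i

lemma softmin (a c s0 : ℝ) (ha : 0 ≤ a) (hc : 0 ≤ c)
    (h : ∀ s, 1 / 2 * (a - s0) ^ 2 + c * |s0| ≤ 1 / 2 * (a - s) ^ 2 + c * |s|) :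
    s0 = max (a - c) 0 := by
  set m := max (a - c) 0 with hm
  by_contra hne
  have hstrict : 1 / 2 * (a - m) ^ 2 + c * |m| < 1 / 2 * (a - s0) ^ 2 + c * |s0| := by
    have hsq : 0 < (s0 - m) ^ 2 := sq_pos_of_ne_zero (sub_ne_zero.mpr hne)
    rcases le_or_gt a c with hac | hac
    · have hm0 : m = 0 := max_eq_right (by linarith)
      rw [hm0] at hsq ⊢
      rcases abs_cases s0 with ⟨he, _⟩ | ⟨he, _⟩ <;> rw [he] <;> simp <;> nlinarith
    · have hm0 : m = a - c := max_eq_left (by linarith)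
      rw [hm0] at hsq ⊢
      rw [abs_of_nonneg (by linarith : (0:ℝ) ≤ a - c)]
      rcases abs_cases s0 with ⟨he, _⟩ | ⟨he, hneg⟩ <;> rw [he] <;> nlinarith
  exact absurd (h m) (not_le.mpr hstrict)

/-- Prop. 3: the minimizer is a soft threshold with threshold `h(k)`, scaled by
`(1 - lam*gamma)^{-1}`, where `k` is the number of nonzeros of the minimizer. -/
theorem thold_formula (n : ℕ) (lam γ : ℝ) (hlam : 0 ≤ lam) (hγ : 0 ≤ γ)
    (hlγ : lam * γ < 1) (z xh : Fin n → ℝ)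
    (hsort : ∀ i j : Fin n, i ≤ j → z j ≤ z i) (hnn : ∀ i, 0 ≤ z i)
    (hmin : ∀ x, C n lam γ z xh ≤ C n lam γ z x)
    (k : ℕ) (hk : k = (Finset.univ.filter (fun i : Fin n => xh i ≠ 0)).card) :
    ∀ i : Fin n, xh i = (1 - lam * γ)⁻¹ * max (z i - hfun n lam γ z k) 0 := by
  have h1g : (0:ℝ) < 1 - lam * γ := by linarith
  -- Step A: the one-dimensional optimality conditions
  have key : ∀ i : Fin n,
      xh i = max (z i - (lam + lam * γ * (∑ j ∈ Finset.univ \ {i}, |xh j|))) 0 := by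
    intro i
    set T : ℝ := ∑ j ∈ Finset.univ \ {i}, |xh j| with hT
    have hTnn : 0 ≤ T := Finset.sum_nonneg fun j _ => abs_nonneg _
    set U : ℝ := ∑ j ∈ Finset.univ \ {i}, (xh j) ^ 2 with hU
    set V : ℝ := ∑ j ∈ Finset.univ \ {i}, (z j - xh j) ^ 2 with hV
    have hC : ∀ s, C n lam γ z (Function.update xh i s) =
        1 / 2 * (z i - s) ^ 2 + (lam + lam * γ * T) * |s|
          + (1 / 2 * V + lam * γ * (T ^ 2 - U) / 2 + lam * T) := by
      intro s
      have h1 : ∑ j, (z j - Function.update xh i s j) ^ 2 = (z i - s) ^ 2 + V :=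
        sum_comp_update (fun j y => (z j - y) ^ 2) xh i s
      have h2 : ∑ j, |Function.update xh i s j| = |s| + T :=
        sum_comp_update (fun _ y => |y|) xh i s
      have h3 : ∑ j, (Function.update xh i s j) ^ 2 = s ^ 2 + U :=
        sum_comp_update (fun _ y => y ^ 2) xh i s
      have h4 : 2 * (∑ i', ∑ m ∈ Ioi i',
            |Function.update xh i s i'| * |Function.update xh i s m|)
          = (|s| + T) ^ 2 - (s ^ 2 + U) := by
        rw [pairQ (fun j => |Function.update xh i s j|), h2]
        congr 1
        rw [← h3]
        exact sum_congr rfl fun j _ => sq_abs _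
      have hQ : (∑ i', ∑ m ∈ Ioi i',
            |Function.update xh i s i'| * |Function.update xh i s m|)
          = ((|s| + T) ^ 2 - (s ^ 2 + U)) / 2 := by linarith
      unfold C P
      rw [h1, h2, hQ]
      linear_combination (lam * γ / 2) * sq_abs s
    have hself : Function.update xh i (xh i) = xh := Function.update_eq_self i xh
    have hCx : C n lam γ z xh =
        1 / 2 * (z i - xh i) ^ 2 + (lam + lam * γ * T) * |xh i|
          + (1 / 2 * V + lam * γ * (T ^ 2 - U) / 2 + lam * T) := by
      have := hC (xh i)
      rwa [hself] at this
    have hf : ∀ s, 1 / 2 * (z i - xh i) ^ 2 + (lam + lam * γ * T) * |xh i|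
        ≤ 1 / 2 * (z i - s) ^ 2 + (lam + lam * γ * T) * |s| := by
      intro s
      have h0 := hmin (Function.update xh i s)
      rw [hCx, hC s] at h0
      linarith
    exact softmin (z i) (lam + lam * γ * T) (xh i) (hnn i)
      (add_nonneg hlam (mul_nonneg (mul_nonneg hlam hγ) hTnn)) hf
  -- Step B: nonnegativity
  have hpos : ∀ i, 0 ≤ xh i := fun i => le_of_le_of_eq (le_max_right _ _) (key i).symm
  set Sa : ℝ := ∑ j, |xh j| with hSa
  set t : ℝ := lam + lam * γ * Sa with ht
  have hTrel : ∀ i : Fin n, (∑ j ∈ Finset.univ \ {i}, |xh j|) = Sa - |xh i| := by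
    intro i
    have := Finset.sum_compl_add_sum ({i} : Finset (Fin n)) (fun j => |xh j|)
    rw [Finset.sum_singleton] at this
    rw [← Finset.compl_eq_univ_sdiff]
    linarith
  -- Step C: characterization
  have hchar : ∀ i : Fin n,
      (xh i = 0 ∧ z i ≤ t) ∨ (0 < xh i ∧ (1 - lam * γ) * xh i = z i - t) := by
    intro i
    have hk2 := key i
    rw [hTrel i, abs_of_nonneg (hpos i)] at hk2
    rcases (hpos i).eq_or_lt with h0 | h0
    · left
      have h0' : xh i = 0 := h0.symm
      refine ⟨h0', ?_⟩
      rw [h0', sub_zero] at hk2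
      have hle := le_max_left (z i - (lam + lam * γ * Sa)) 0
      rw [← hk2] at hle
      linarith [ht]
    · right
      refine ⟨h0, ?_⟩
      rcases le_or_gt (z i - (lam + lam * γ * (Sa - xh i))) 0 with hle | hlt
      · rw [max_eq_right hle] at hk2; linarith
      · rw [max_eq_left hlt.le] at hk2
        linear_combination hk2 + ht
  -- Step D: nonzero set = above-threshold set
  have hNt : ∀ i : Fin n, xh i ≠ 0 ↔ t < z i := by
    intro i
    constructor
    · intro hne
      rcases hchar i with ⟨h0, _⟩ | ⟨h0, heq⟩
      · exact absurd h0 hne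
      · nlinarith
    · intro hlt hzero
      rcases hchar i with ⟨_, hle⟩ | ⟨h0, _⟩
      · linarith
      · exact absurd hzero (ne_of_gt h0)
  -- Step E: nonzero set is the first k indices
  have hN : ∀ i : Fin n, xh i ≠ 0 ↔ (i : ℕ) < k := by
    intro i
    constructor
    · intro hne
      have hsub : Finset.Iic i ⊆ Finset.univ.filter (fun j : Fin n => xh j ≠ 0) := by
        intro j hj
        rw [Finset.mem_Iic] at hj
        refine Finset.mem_filter.mpr ⟨mem_univ j, ?_⟩
        rw [hNt j]
        exact lt_of_lt_of_le ((hNt i).mp hne) (hsort j i hj)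
      have := Finset.card_le_card hsub
      rw [Fin.card_Iic, ← hk] at this
      omega
    · intro hik
      by_contra hzero
      have hsub : Finset.univ.filter (fun j : Fin n => xh j ≠ 0) ⊆ Finset.Iio i := by
        intro j hj
        rw [Finset.mem_filter] at hj
        rw [Finset.mem_Iio]
        by_contra hge
        push_neg at hge
        exact ((hNt i).mpr (lt_of_lt_of_le ((hNt j).mp hj.2) (hsort i j hge))) hzero
      have := Finset.card_le_card hsub
      rw [Fin.card_Iio, ← hk] at this
      omega
  -- Step F: arithmetic identification of the threshold
  set Z : ℝ := ∑ m ∈ Finset.univ.filter (fun m : Fin n => (m : ℕ) < k), z m with hZ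
  have hNfilter : Finset.univ.filter (fun i : Fin n => xh i ≠ 0)
      = Finset.univ.filter (fun m : Fin n => (m : ℕ) < k) :=
    Finset.filter_congr fun i _ => by simp [hN i]
  have hSsum : Sa = ∑ j ∈ Finset.univ.filter (fun m : Fin n => (m : ℕ) < k), xh j := by
    rw [hSa, Finset.sum_congr rfl fun j _ => abs_of_nonneg (hpos j), ← hNfilter,
      Finset.sum_filter_ne_zero]
  have hcard : (Finset.univ.filter (fun m : Fin n => (m : ℕ) < k)).card = k := by
    rw [← hNfilter, ← hk]
  have heq1 : (1 - lam * γ) * Sa = Z - (k : ℝ) * t := by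
    rw [hSsum, Finset.mul_sum, hZ]
    have hterm : ∀ j ∈ Finset.univ.filter (fun m : Fin n => (m : ℕ) < k),
        (1 - lam * γ) * xh j = z j - t := by
      intro j hj
      rw [Finset.mem_filter] at hj
      rcases hchar j with ⟨h0, _⟩ | ⟨_, heq⟩
      · exact absurd h0 ((hN j).mpr hj.2)
      · exact heq
    rw [Finset.sum_congr rfl hterm, Finset.sum_sub_distrib, Finset.sum_const, hcard]
    ring
  have hD : (0:ℝ) < 1 + ((k : ℝ) - 1) * lam * γ := by
    have : (0:ℝ) ≤ (k : ℝ) * (lam * γ) := mul_nonneg (Nat.cast_nonneg k)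
      (mul_nonneg hlam hγ)
    nlinarith
  have hht : hfun n lam γ z k = t := by
    rw [hfun, ← hZ, div_eq_iff hD.ne']
    linear_combination (-(lam * γ)) * heq1 - (1 - lam * γ) * ht
  -- Conclusion
  intro i
  rw [hht]
  rcases hchar i with ⟨h0, hle⟩ | ⟨h0, heq⟩
  · rw [h0, max_eq_right (by linarith : z i - t ≤ 0), mul_zero]
  · rw [max_eq_left (by nlinarith : (0:ℝ) ≤ z i - t), ← heq,
      inv_mul_cancel_left₀ h1g.ne']
end

section
/- Let λ ≥ 0, γ ≥ 0 with λ·γ < 1, and let z ∈ ℝⁿ satisfy z_1 ≥ z_2 ≥ … ≥ z_n ≥ 0. For any index i with 1 ≤ i ≤ n−1: if z_{i+1} > h(i), then z_i > h(i−1). -/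
open Finset

/-- Lemma 1(a): if `z_{i+1} > h(i)` then `z_i > h(i-1)` (1-based indices). -/
theorem selectk_a (n : ℕ) (lam γ : ℝ) (hlam : 0 ≤ lam) (hγ : 0 ≤ γ)
    (hlγ : lam * γ < 1) (z : Fin n → ℝ)
    (hsort : ∀ i j : Fin n, i ≤ j → z j ≤ z i) (hnn : ∀ i, 0 ≤ z i)
    (i : ℕ) (hi1 : 1 ≤ i) (hi2 : i < n)
    (h : z ⟨i, hi2⟩ > hfun n lam γ z i) :
    z ⟨i - 1, by omega⟩ > hfun n lam γ z (i - 1) := by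
  have hi1' : i - 1 < n := by omega
  have hicast : ((i - 1 : ℕ) : ℝ) = (i : ℝ) - 1 := by
    push_cast [Nat.cast_sub hi1]; ring
  have hir : (1 : ℝ) ≤ (i : ℝ) := by exact_mod_cast hi1
  have hlγ0 : 0 ≤ lam * γ := mul_nonneg hlam hγ
  have hD1 : (0:ℝ) < 1 + ((i:ℝ) - 1) * lam * γ := by nlinarith
  have hD0 : (0:ℝ) < 1 + (((i - 1 : ℕ) : ℝ) - 1) * lam * γ := by
    rw [hicast]; nlinarith
  set a := z ⟨i - 1, hi1'⟩ with ha
  set b := z ⟨i, hi2⟩ with hb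
  have hba : b ≤ a := hsort ⟨i - 1, hi1'⟩ ⟨i, hi2⟩ (Fin.mk_le_mk.mpr (by omega))
  have hsum : ∑ m ∈ Finset.univ.filter (fun m : Fin n => (m : ℕ) < i), z m
      = (∑ m ∈ Finset.univ.filter (fun m : Fin n => (m : ℕ) < i - 1), z m) + a := by
    have heq : Finset.univ.filter (fun m : Fin n => (m : ℕ) < i)
        = insert (⟨i - 1, hi1'⟩ : Fin n)
            (Finset.univ.filter (fun m : Fin n => (m : ℕ) < i - 1)) := by
      ext m
      simp [Finset.mem_insert, Fin.ext_iff]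
      omega
    rw [heq, Finset.sum_insert (by simp)]
    ring
  set S := ∑ m ∈ Finset.univ.filter (fun m : Fin n => (m : ℕ) < i - 1), z m with hS
  have ha' : a > hfun n lam γ z i := lt_of_lt_of_le h hba
  rw [hfun, hsum] at ha'
  rw [hfun]
  rw [gt_iff_lt, div_lt_iff₀ hD1] at ha'
  rw [gt_iff_lt, div_lt_iff₀ hD0, hicast]
  nlinarith
end

section
/- Let λ > 0, γ > 0 with λ·γ < 1, and let z ∈ ℝⁿ satisfy z_1 ≥ z_2 ≥ … ≥ z_n ≥ 0. For any index i with 0 ≤ i ≤ n−1: if z_{i+1} > h(i), then z_{i+1} > h(i+1) > h(i). -/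
open Finset

/-! The step `h(i) ↦ h(i+1)` adds `λγ z_{i+1}` to the numerator and `λγ` to the denominator,
so `h(i+1)` is the mediant of `h(i)` and `z_{i+1} = λγ z_{i+1} / λγ`; a mediant lies strictly
between two distinct fractions with positive denominators. -/

section Mediant

variable {K : Type*} [Field K] [LinearOrder K] [IsStrictOrderedRing K] {a b c d : K}

theorem div_lt_add_div_add (hb : 0 < b) (hd : 0 < d) (h : a / b < c / d) :
    a / b < (a + c) / (b + d) := by
  rw [div_lt_div_iff₀ hb hd] at h
  rw [div_lt_div_iff₀ hb (add_pos hb hd)]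
  linarith

theorem add_div_add_lt_div (hb : 0 < b) (hd : 0 < d) (h : a / b < c / d) :
    (a + c) / (b + d) < c / d := by
  rw [div_lt_div_iff₀ hb hd] at h
  rw [div_lt_div_iff₀ (add_pos hb hd) hd]
  linarith

end Mediant

theorem Fin.sum_filter_val_lt_succ {M : Type*} [AddCommMonoid M] {n : ℕ} (z : Fin n → M)
    {i : ℕ} (hi : i < n) :
    ∑ m ∈ univ.filter (fun m : Fin n => (m : ℕ) < i + 1), z m
      = ∑ m ∈ univ.filter (fun m : Fin n => (m : ℕ) < i), z m + z ⟨i, hi⟩ := by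
  have hinsert : univ.filter (fun m : Fin n => (m : ℕ) < i + 1)
      = insert ⟨i, hi⟩ (univ.filter (fun m : Fin n => (m : ℕ) < i)) := by
    ext m
    simp [le_iff_lt_or_eq, Fin.ext_iff, or_comm]
  rw [hinsert, sum_insert (by simp), add_comm]

theorem hfun_succ {n : ℕ} (lam γ : ℝ) (z : Fin n → ℝ) {i : ℕ} (hi : i < n) :
    hfun n lam γ z (i + 1) =
      (lam * (1 - lam * γ) + lam * γ * ∑ m ∈ univ.filter (fun m : Fin n => (m : ℕ) < i), z m
          + lam * γ * z ⟨i, hi⟩) /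
        (1 + ((i : ℝ) - 1) * lam * γ + lam * γ) := by
  rw [hfun, Fin.sum_filter_val_lt_succ z hi]
  push_cast
  ring_nf

theorem hfun_denom_pos {lam γ : ℝ} (hlγ₀ : 0 ≤ lam * γ) (hlγ : lam * γ < 1) (i : ℕ) :
    0 < 1 + ((i : ℝ) - 1) * lam * γ := by
  have : (0 : ℝ) ≤ i := Nat.cast_nonneg i
  nlinarith

theorem h_increasing_general (n : ℕ) (lam γ : ℝ) (hlam : 0 < lam) (hγ : 0 < γ)
    (hlγ : lam * γ < 1) (z : Fin n → ℝ)
    (i : ℕ) (hi : i < n)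
    (h : z ⟨i, hi⟩ > hfun n lam γ z i) :
    z ⟨i, hi⟩ > hfun n lam γ z (i + 1) ∧ hfun n lam γ z (i + 1) > hfun n lam γ z i := by
  have hlγ₀ : 0 < lam * γ := mul_pos hlam hγ
  have hD := hfun_denom_pos hlγ₀.le hlγ i
  have hz : z ⟨i, hi⟩ = lam * γ * z ⟨i, hi⟩ / (lam * γ) := by field_simp
  rw [hz] at h ⊢
  rw [hfun_succ lam γ z hi]
  exact ⟨add_div_add_lt_div hD hlγ₀ h, div_lt_add_div_add hD hlγ₀ h⟩

/-- Prop. 4: if `z_{i+1} > h(i)` then `z_{i+1} > h(i+1) > h(i)` (1-based indices). -/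
theorem h_increasing (n : ℕ) (lam γ : ℝ) (hlam : 0 < lam) (hγ : 0 < γ)
    (hlγ : lam * γ < 1) (z : Fin n → ℝ)
    (hsort : ∀ i j : Fin n, i ≤ j → z j ≤ z i) (hnn : ∀ i, 0 ≤ z i)
    (i : ℕ) (hi : i < n)
    (h : z ⟨i, hi⟩ > hfun n lam γ z i) :
    z ⟨i, hi⟩ > hfun n lam γ z (i + 1) ∧ hfun n lam γ z (i + 1) > hfun n lam γ z i :=
  h_increasing_general n lam γ hlam hγ hlγ z i hi h
end

section
/- Let λ > 0, γ > 0 with λ·γ < 1, let z ∈ ℝⁿ satisfy z_1 ≥ z_2 ≥ … ≥ z_n ≥ 0, and let 1 ≤ k ≤ n. If z_{i+1} > h(i) holds for every i ∈ {0, 1, …, k−1}, then z_k > h(k) and h(k) ≥ h(k−1) ≥ … ≥ h(1) ≥ h(0) = λ. -/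
open Finset

/-- The chain `z_k > h(k) ≥ h(k-1) ≥ ... ≥ h(0) = lam`, assuming `z_{i+1} > h(i)`
for all `i ∈ {0, ..., k-1}` (1-based indices for `z`). -/
theorem h_chain (n : ℕ) (lam γ : ℝ) (hlam : 0 < lam) (hγ : 0 < γ)
    (hlγ : lam * γ < 1) (z : Fin n → ℝ)
    (hsort : ∀ i j : Fin n, i ≤ j → z j ≤ z i) (hnn : ∀ i, 0 ≤ z i)
    (k : ℕ) (hk1 : 1 ≤ k) (hk2 : k ≤ n)
    (hyp : ∀ i, (hik : i < k) → z ⟨i, by omega⟩ > hfun n lam γ z i) :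
    z ⟨k - 1, by omega⟩ > hfun n lam γ z k ∧
    (∀ j, j < k → hfun n lam γ z j ≤ hfun n lam γ z (j + 1)) ∧
    hfun n lam γ z 0 = lam := by
  have hc0 : 0 < lam * γ := mul_pos hlam hγ
  have hD : ∀ i : ℕ, 0 < 1 + ((i : ℝ) - 1) * lam * γ := by
    intro i
    match i with
    | 0 => push_cast; linarith
    | j + 1 =>
      push_cast
      have hj : (0:ℝ) ≤ (j : ℝ) := Nat.cast_nonneg j
      nlinarith
  have key : ∀ i, ∀ _ : i < k, hfun n lam γ z (i+1) < z ⟨i, by omega⟩ ∧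
      hfun n lam γ z i ≤ hfun n lam γ z (i+1) := by
    intro i hik
    have hin : i < n := lt_of_lt_of_le hik hk2
    have hzi := hyp i hik
    set S := ∑ m ∈ Finset.univ.filter (fun m : Fin n => (m : ℕ) < i), z m with hS
    have hstep : ∑ m ∈ Finset.univ.filter (fun m : Fin n => (m : ℕ) < i + 1), z m
        = S + z ⟨i, hin⟩ := by
      have hins : Finset.univ.filter (fun m : Fin n => (m : ℕ) < i + 1)
          = insert ⟨i, hin⟩ (Finset.univ.filter (fun m : Fin n => (m : ℕ) < i)) := by
        ext m
        simp [Fin.ext_iff]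
        omega
      rw [hins, Finset.sum_insert (by simp)]
      ring
    have hNi : hfun n lam γ z i
        = (lam * (1 - lam * γ) + lam * γ * S) / (1 + ((i : ℝ) - 1) * lam * γ) := rfl
    have hNi1 : hfun n lam γ z (i+1)
        = (lam * (1 - lam * γ) + lam * γ * (S + z ⟨i, hin⟩)) / (1 + (i : ℝ) * lam * γ) := by
      rw [hfun, hstep]
      push_cast
      ring_nf
    have hDi := hD i
    have hDi1 : (0:ℝ) < 1 + (i : ℝ) * lam * γ := by
      have := hD (i+1); push_cast at this; linarith
    have hzi' : lam * (1 - lam * γ) + lam * γ * S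
        < z ⟨i, hin⟩ * (1 + ((i : ℝ) - 1) * lam * γ) := by
      rw [hNi] at hzi
      exact (div_lt_iff₀ hDi).mp hzi
    constructor
    · rw [hNi1, div_lt_iff₀ hDi1]
      nlinarith
    · rw [hNi, hNi1, div_le_div_iff₀ hDi hDi1]
      nlinarith
  have h0 : hfun n lam γ z 0 = lam := by
    have hfe : Finset.univ.filter (fun m : Fin n => (m : ℕ) < 0) = ∅ := by
      ext m; simp
    rw [hfun, hfe]
    push_cast
    rw [Finset.sum_empty]
    rw [div_eq_iff (by intro h; nlinarith : (1:ℝ) + (0 - 1) * lam * γ ≠ 0)]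
    ring
  refine ⟨?_, fun j hj => (key j hj).2, h0⟩
  have hk' : k - 1 + 1 = k := by omega
  have := (key (k-1) (by omega)).1
  have heq : hfun n lam γ z (k - 1 + 1) = hfun n lam γ z k := by rw [hk']
  rw [heq] at this
  exact this
end

section
/- Let λ ≥ 0, γ ≥ 0 with λ·γ < 1, and let z ∈ ℝⁿ satisfy |z_i| ≤ λ for every index i. Then the zero vector is the minimizer of x ↦ C_{λ,γ}(x|z); that is, the threshold function maps z to 0 (the deadzone of the threshold function is a cube of width λ). -/
open Finset

/-- The deadzone of the threshold function is a cube of width `lam`: if `|z_i| ≤ lam`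
for every `i`, then the zero vector is the minimizer of the cost. -/
theorem deadzone (n : ℕ) (lam γ : ℝ) (hlam : 0 ≤ lam) (hγ : 0 ≤ γ)
    (hlγ : lam * γ < 1) (z : Fin n → ℝ) (hz : ∀ i, |z i| ≤ lam) :
    (∀ x : Fin n → ℝ, C n lam γ z 0 ≤ C n lam γ z x) ∧
    (∀ x : Fin n → ℝ, (∀ x', C n lam γ z x ≤ C n lam γ z x') → x = 0) := by
  have key : ∀ x : Fin n → ℝ,
      C n lam γ z 0 + (1/2) * ∑ i : Fin n, (x i)^2 ≤ C n lam γ z x := by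
    intro x
    have hcross : 0 ≤ ∑ i : Fin n, ∑ m ∈ Finset.Ioi i, |x i| * |x m| := by
      apply Finset.sum_nonneg; intro i _
      apply Finset.sum_nonneg; intro m _
      positivity
    have hsum : ∑ i : Fin n, z i * x i ≤ lam * ∑ i : Fin n, |x i| := by
      rw [Finset.mul_sum]
      apply Finset.sum_le_sum
      intro i _
      calc z i * x i ≤ |z i * x i| := le_abs_self _
        _ = |z i| * |x i| := abs_mul _ _
        _ ≤ lam * |x i| := by
            exact mul_le_mul_of_nonneg_right (hz i) (abs_nonneg _)
    have hexp : ∑ i : Fin n, (z i - x i)^2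
        = ∑ i : Fin n, (z i)^2 - 2 * ∑ i : Fin n, z i * x i + ∑ i : Fin n, (x i)^2 := by
      simp only [sub_sq]
      rw [Finset.sum_add_distrib, Finset.sum_sub_distrib]
      congr 1
      congr 1
      rw [Finset.mul_sum]
      exact Finset.sum_congr rfl (fun i _ => by ring)
    unfold C P
    simp only [Pi.zero_apply, abs_zero, mul_zero, zero_mul, Finset.sum_const_zero,
      sub_zero, add_zero]
    rw [hexp]
    nlinarith [hsum, mul_nonneg (mul_nonneg hlam hγ) hcross]
  constructor
  · intro x
    have h2 : 0 ≤ (1/2) * ∑ i : Fin n, (x i)^2 := by positivity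
    linarith [key x]
  · intro x hmin
    have h1 := key x
    have h2 := hmin 0
    have h3 : ∑ i : Fin n, (x i)^2 ≤ 0 := by linarith
    have h4 : ∀ i ∈ Finset.univ, (x i)^2 = 0 := by
      intro i _
      have := Finset.sum_nonneg (fun i (_ : i ∈ (Finset.univ : Finset (Fin n))) =>
        sq_nonneg (x i))
      have hsz : ∑ i : Fin n, (x i)^2 = 0 := le_antisymm h3 this
      exact (Finset.sum_eq_zero_iff_of_nonneg (fun i _ => sq_nonneg (x i))).mp hsz i
        (Finset.mem_univ i)
    funext i
    have := h4 i (Finset.mem_univ i)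
    simpa using pow_eq_zero_iff (n := 2) (by norm_num) |>.mp this
end

section
/- Let λ > 0, γ > 0 with λ·γ < 1, and let z ∈ ℝⁿ satisfy z_1 ≥ z_2 ≥ … ≥ z_n ≥ 0 with z_1 > λ and z_2 ≤ λ + λγ(z_1 − λ). Then the minimizer x̂ of x ↦ C_{λ,γ}(x|z) has exactly one nonzero component: x̂_1 = z_1 − λ and x̂_i = 0 for all i ≥ 2. -/
open Finset

set_option maxHeartbeats 1000000

lemma sq_sum_ident {n : ℕ} (A : Finset (Fin n)) (hA : ∀ i ∈ A, Finset.Ioi i ⊆ A) (f : Fin n → ℝ) :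
    (∑ i ∈ A, f i) ^ 2 =
      ∑ i ∈ A, f i ^ 2 + 2 * ∑ i ∈ A, ∑ m ∈ Finset.Ioi i, f i * f m := by
  have hsplit : ∀ i m : Fin n, f i * f m =
      (if i < m then f i * f m else 0) + (if m < i then f i * f m else 0) +
      (if m = i then f i * f m else 0) := by
    intro i m
    rcases lt_trichotomy i m with h | h | h
    · simp [h, asymm h, h.ne']
    · simp [h, lt_irrefl]
    · simp [h, asymm h, h.ne]
  have hU : ∀ i ∈ A, (∑ m ∈ A, if i < m then f i * f m else 0)
      = ∑ m ∈ Finset.Ioi i, f i * f m := by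
    intro i hi
    rw [← Finset.sum_filter]
    congr 1
    ext m
    simp only [Finset.mem_filter, Finset.mem_Ioi]
    exact ⟨fun h => h.2, fun h => ⟨hA i hi (Finset.mem_Ioi.mpr h), h⟩⟩
  have hL : (∑ i ∈ A, ∑ m ∈ A, if m < i then f i * f m else 0)
      = ∑ i ∈ A, ∑ m ∈ A, if i < m then f i * f m else 0 := by
    rw [Finset.sum_comm]
    apply Finset.sum_congr rfl; intro i _
    apply Finset.sum_congr rfl; intro m _
    rw [mul_comm]
  have hD : (∑ i ∈ A, ∑ m ∈ A, if m = i then f i * f m else 0) = ∑ i ∈ A, f i ^ 2 := by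
    apply Finset.sum_congr rfl; intro i hi
    rw [Finset.sum_ite_eq' A i (fun m => f i * f m), if_pos hi, sq]
  calc (∑ i ∈ A, f i) ^ 2 = ∑ i ∈ A, ∑ m ∈ A, f i * f m := by
        rw [sq, Finset.sum_mul_sum]
    _ = ∑ i ∈ A, ∑ m ∈ A, ((if i < m then f i * f m else 0) + (if m < i then f i * f m else 0) +
        (if m = i then f i * f m else 0)) := by
        exact Finset.sum_congr rfl fun i _ => Finset.sum_congr rfl fun m _ => hsplit i m
    _ = (∑ i ∈ A, ∑ m ∈ A, if i < m then f i * f m else 0)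
        + (∑ i ∈ A, ∑ m ∈ A, if m < i then f i * f m else 0)
        + (∑ i ∈ A, ∑ m ∈ A, if m = i then f i * f m else 0) := by
        simp [Finset.sum_add_distrib]
    _ = ∑ i ∈ A, f i ^ 2 + 2 * ∑ i ∈ A, ∑ m ∈ Finset.Ioi i, f i * f m := by
        rw [hL, hD, Finset.sum_congr rfl hU]; ring

lemma abs_step (zi x : ℝ) (hz : 0 ≤ zi) : (zi - |x|) ^ 2 ≤ (zi - x) ^ 2 := by
  nlinarith [le_abs_self x, sq_abs x, mul_nonneg hz (sub_nonneg.mpr (le_abs_self x))]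

/-- If `z_1 > lam` and `z_2 ≤ lam + lam*gamma*(z_1 - lam)`, the minimizer keeps a single
nonzero component: `xh_1 = z_1 - lam` and all other components vanish. -/
theorem single_survivor (n : ℕ) (hn : 2 ≤ n) (lam γ : ℝ) (hlam : 0 < lam) (hγ : 0 < γ)
    (hlγ : lam * γ < 1) (z xh : Fin n → ℝ)
    (hsort : ∀ i j : Fin n, i ≤ j → z j ≤ z i) (hnn : ∀ i, 0 ≤ z i)
    (h1 : z ⟨0, by omega⟩ > lam)
    (h2 : z ⟨1, by omega⟩ ≤ lam + lam * γ * (z ⟨0, by omega⟩ - lam))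
    (hmin : ∀ x, C n lam γ z xh ≤ C n lam γ z x) :
    xh ⟨0, by omega⟩ = z ⟨0, by omega⟩ - lam ∧
    ∀ i : Fin n, 1 ≤ (i : ℕ) → xh i = 0 := by
  set i0 : Fin n := ⟨0, by omega⟩ with hi0
  set i1 : Fin n := ⟨1, by omega⟩ with hi1
  set A : Finset (Fin n) := Finset.Ioi i0 with hAdef
  obtain ⟨a, hadef⟩ : ∃ x : ℝ, x = z i0 - lam := ⟨_, rfl⟩
  have h2' : z i1 ≤ lam + lam * γ * a := by rw [hadef]; exact h2
  have ha : 0 < a := by rw [hadef]; linarith only [h1]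
  obtain ⟨t, htdef⟩ : ∃ t' : Fin n → ℝ, t' = fun i => |xh i| := ⟨_, rfl⟩
  have htnn : ∀ i, 0 ≤ t i := by
    intro i; simp only [htdef]; exact abs_nonneg _
  obtain ⟨xstar, hxs⟩ : ∃ x' : Fin n → ℝ, x' = fun i => if i = i0 then a else 0 := ⟨_, rfl⟩
  obtain ⟨s, hs⟩ : ∃ x : ℝ, x = ∑ i ∈ A, t i := ⟨_, rfl⟩
  obtain ⟨q, hq⟩ : ∃ x : ℝ, x = ∑ i ∈ A, t i ^ 2 := ⟨_, rfl⟩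
  obtain ⟨c, hc⟩ : ∃ x : ℝ, x = ∑ i ∈ A, ∑ m ∈ Finset.Ioi i, t i * t m := ⟨_, rfl⟩
  obtain ⟨w, hw⟩ : ∃ x : ℝ, x = ∑ i ∈ A, z i * t i := ⟨_, rfl⟩
  have hs0 : 0 ≤ s := hs ▸ Finset.sum_nonneg fun i _ => htnn i
  have hq0 : 0 ≤ q := hq ▸ Finset.sum_nonneg fun i _ => sq_nonneg _
  have hAerase : A = Finset.univ.erase i0 := by
    ext i
    simp only [hAdef, Finset.mem_Ioi, Finset.mem_erase, Finset.mem_univ, and_true]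
    constructor
    · intro h
      intro he; rw [he] at h; exact lt_irrefl _ h
    · intro h
      have : i0.val < i.val := by
        rcases Nat.eq_zero_or_pos i.val with h0 | h0
        · exact absurd (Fin.ext h0 : i = i0) h
        · simpa [hi0] using h0
      exact this
  have split : ∀ f : Fin n → ℝ, ∑ i : Fin n, f i = f i0 + ∑ i ∈ A, f i := by
    intro f
    rw [hAerase]
    exact (Finset.add_sum_erase _ f (Finset.mem_univ i0)).symm
  have hA : ∀ i ∈ A, Finset.Ioi i ⊆ A := by
    intro i hi m hm
    simp only [hAdef, Finset.mem_Ioi] at *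
    exact lt_trans hi hm
  have hmemA : ∀ i : Fin n, i ∈ A ↔ i ≠ i0 := by
    intro i
    rw [hAerase]; simp
  -- values of z on A are at most z i1
  have hzA : ∀ i ∈ A, z i ≤ z i1 := by
    intro i hi
    apply hsort i1 i
    have : i ≠ i0 := (hmemA i).mp hi
    have : (1 : ℕ) ≤ i.val := by
      rcases Nat.eq_zero_or_pos i.val with h0 | h0
      · exact absurd (Fin.ext h0 : i = i0) this
      · omega
    exact this
  -- e7: square identity
  have e7 : s ^ 2 = q + 2 * c := by rw [hs, hq, hc]; exact sq_sum_ident A hA t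
  -- abs of t
  have habs : ∀ i, |t i| = t i := by intro i; simp only [htdef]; exact abs_abs _
  -- e1
  have e1 : ∑ i : Fin n, (z i - t i) ^ 2 = (z i0 - t i0) ^ 2 + ∑ i ∈ A, (z i - t i) ^ 2 :=
    split _
  have e8 : ∑ i ∈ A, (z i - t i) ^ 2 = (∑ i ∈ A, (z i) ^ 2) - 2 * w + q := by
    rw [hw, hq, Finset.mul_sum, ← Finset.sum_sub_distrib, ← Finset.sum_add_distrib]
    exact Finset.sum_congr rfl fun i _ => by ring
  have e2 : ∑ i : Fin n, (z i - xstar i) ^ 2 = lam ^ 2 + ∑ i ∈ A, (z i) ^ 2 := by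
    rw [split]
    congr 1
    · simp [hxs, hadef]
    · apply Finset.sum_congr rfl
      intro i hi
      have : xstar i = 0 := by simp [hxs, (hmemA i).mp hi]
      rw [this]; ring
  have e3 : ∑ i : Fin n, |t i| = t i0 + s := by
    rw [split]
    congr 1
    · exact habs i0
    · rw [hs]; exact Finset.sum_congr rfl fun i _ => habs i
  have e4 : ∑ i : Fin n, |xstar i| = a := by
    rw [split]
    have h0 : |xstar i0| = a := by simp [hxs, abs_of_pos ha]
    have hrest : ∑ i ∈ A, |xstar i| = 0 := by
      apply Finset.sum_eq_zero
      intro i hi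
      simp [hxs, (hmemA i).mp hi]
    rw [h0, hrest, add_zero]
  have e5 : ∑ i : Fin n, ∑ m ∈ Finset.Ioi i, |t i| * |t m| = t i0 * s + c := by
    have : ∀ i : Fin n, ∑ m ∈ Finset.Ioi i, |t i| * |t m| = ∑ m ∈ Finset.Ioi i, t i * t m :=
      fun i => Finset.sum_congr rfl fun m _ => by rw [habs, habs]
    rw [Finset.sum_congr rfl fun i _ => this i, split]
    rw [hs, hc, Finset.mul_sum]
  have e6 : ∑ i : Fin n, ∑ m ∈ Finset.Ioi i, |xstar i| * |xstar m| = 0 := by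
    apply Finset.sum_eq_zero
    intro i _
    apply Finset.sum_eq_zero
    intro m hm
    have hmne : m ≠ i0 := by
      intro he
      have := Finset.mem_Ioi.mp hm
      rw [he] at this
      have hle : i0 ≤ i := by
        rw [Fin.le_def, hi0]
        exact Nat.zero_le _
      exact absurd (lt_of_le_of_lt hle this) (lt_irrefl _)
    have : xstar m = 0 := by simp [hxs, hmne]
    rw [this]; simp
  -- bound on w
  have e9 : w ≤ (lam + lam * γ * a) * s := by
    rw [hw]
    calc ∑ i ∈ A, z i * t i ≤ ∑ i ∈ A, z i1 * t i :=
          Finset.sum_le_sum fun i hi => mul_le_mul_of_nonneg_right (hzA i hi) (htnn i)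
      _ = z i1 * s := by rw [hs, Finset.mul_sum]
      _ ≤ (lam + lam * γ * a) * s := mul_le_mul_of_nonneg_right h2' hs0
  -- C t ≤ C xh
  have hPt : P n γ t = P n γ xh := by
    simp only [P, htdef, abs_abs]
  have hBt : C n lam γ z t ≤ C n lam γ z xh := by
    simp only [C, hPt]
    have hle : ∑ i : Fin n, (z i - t i) ^ 2 ≤ ∑ i : Fin n, (z i - xh i) ^ 2 := by
      apply Finset.sum_le_sum
      intro i _
      simp only [htdef]
      exact abs_step (z i) (xh i) (hnn i)
    linarith only [hle]
  -- master inequality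
  have hz0 : z i0 = a + lam := by rw [hadef]; ring
  have hexp : C n lam γ z t - C n lam γ z xstar =
      ((1/2) * ((a + lam - t i0) ^ 2 + ((∑ i ∈ A, (z i) ^ 2) - 2 * w + q))
        + lam * (γ * (t i0 * s + c) + (t i0 + s)))
      - ((1/2) * (lam ^ 2 + ∑ i ∈ A, (z i) ^ 2) + lam * (γ * 0 + a)) := by
    simp only [C, P]
    rw [e1, e8, e2, e3, e4, e5, e6, hz0]
  have h7' : (lam * γ / 2) * (q + 2 * c - s ^ 2) = 0 := by rw [e7]; ring
  have master : (1/2) * (t i0 - a + lam * γ * s) ^ 2 + (lam * γ * (1 - lam * γ) / 2) * s ^ 2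
      + ((1 - lam * γ) / 2) * q ≤ C n lam γ z t - C n lam γ z xstar := by
    rw [hexp]
    have hident : ((1/2) * ((a + lam - t i0) ^ 2 + ((∑ i ∈ A, (z i) ^ 2) - 2 * w + q))
        + lam * (γ * (t i0 * s + c) + (t i0 + s)))
      - ((1/2) * (lam ^ 2 + ∑ i ∈ A, (z i) ^ 2) + lam * (γ * 0 + a))
      = ((1/2) * (t i0 - a + lam * γ * s) ^ 2 + (lam * γ * (1 - lam * γ) / 2) * s ^ 2
        + ((1 - lam * γ) / 2) * q)
        + (((lam + lam * γ * a) * s - w) + (lam * γ / 2) * (q + 2 * c - s ^ 2)) := by ring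
    rw [hident, h7']
    have h9 : 0 ≤ (lam + lam * γ * a) * s - w := by linarith only [e9]
    linarith only [h9]
  have hCle : C n lam γ z t ≤ C n lam γ z xstar := le_trans hBt (hmin xstar)
  have hlγ0 : 0 < lam * γ := mul_pos hlam hγ
  have h1K : (0:ℝ) < 1 - lam * γ := by linarith only [hlγ]
  have t1nn : (0:ℝ) ≤ (1/2) * (t i0 - a + lam * γ * s) ^ 2 := by positivity
  have t2nn : (0:ℝ) ≤ (lam * γ * (1 - lam * γ) / 2) * s ^ 2 :=
    mul_nonneg (div_nonneg (mul_nonneg hlγ0.le h1K.le) (by norm_num)) (sq_nonneg s)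
  have t3nn : (0:ℝ) ≤ ((1 - lam * γ) / 2) * q := mul_nonneg (by linarith only [h1K]) hq0
  have hqz : q = 0 := by
    have h3 : ((1 - lam * γ) / 2) * q = 0 := le_antisymm
      (by linarith only [master, hCle, t1nn, t2nn]) t3nn
    rcases mul_eq_zero.mp h3 with h | h
    · exfalso; linarith only [h1K, h]
    · exact h
  have hsz : s = 0 := by
    have h3 : (lam * γ * (1 - lam * γ) / 2) * s ^ 2 = 0 := le_antisymm
      (by linarith only [master, hCle, t1nn, t3nn]) t2nn
    rcases mul_eq_zero.mp h3 with h | h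
    · exfalso
      have : (0:ℝ) < lam * γ * (1 - lam * γ) / 2 := div_pos (mul_pos hlγ0 h1K) (by norm_num)
      linarith only [h, this]
    · exact pow_eq_zero_iff (by norm_num) |>.mp h
  have huz : t i0 = a := by
    have h3 : (1/2) * (t i0 - a + lam * γ * s) ^ 2 = 0 := le_antisymm
      (by linarith only [master, hCle, t2nn, t3nn]) t1nn
    have h4 : (t i0 - a + lam * γ * s) ^ 2 = 0 := by linarith only [h3]
    have h5 := pow_eq_zero_iff (n := 2) (by norm_num) |>.mp h4
    rw [hsz] at h5
    linarith only [h5]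
  -- individual zeros
  have hzero : ∀ i ∈ A, xh i = 0 := by
    intro i hi
    have hsum0 : ∑ i ∈ A, t i ^ 2 = 0 := by rw [← hq]; exact hqz
    have hti := (Finset.sum_eq_zero_iff_of_nonneg (fun i _ => sq_nonneg (t i))).mp hsum0 i hi
    have h0 : t i = 0 := pow_eq_zero_iff (n := 2) (by norm_num) |>.mp hti
    simp only [htdef] at h0
    exact abs_eq_zero.mp h0
  constructor
  · -- first component
    -- C t = C xh
    have hCeq : C n lam γ z t = C n lam γ z xh := le_antisymm hBt (by
      calc C n lam γ z xh ≤ C n lam γ z xstar := hmin xstar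
        _ ≤ C n lam γ z t := by linarith only [master, t1nn, t2nn, t3nn])
    have hsumeq : ∑ i : Fin n, (z i - t i) ^ 2 = ∑ i : Fin n, (z i - xh i) ^ 2 := by
      have hx := hCeq
      simp only [C, hPt] at hx
      linarith only [hx]
    have hg0 : ∀ i : Fin n, (z i - xh i) ^ 2 - (z i - t i) ^ 2 = 0 := by
      have hnn' : ∀ i ∈ Finset.univ, (0:ℝ) ≤ (z i - xh i) ^ 2 - (z i - t i) ^ 2 := by
        intro i _
        simp only [htdef]
        linarith only [abs_step (z i) (xh i) (hnn i)]
      have hsum : ∑ i : Fin n, ((z i - xh i) ^ 2 - (z i - t i) ^ 2) = 0 := by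
        rw [Finset.sum_sub_distrib, hsumeq]; ring
      intro i
      exact (Finset.sum_eq_zero_iff_of_nonneg hnn').mp hsum i (Finset.mem_univ i)
    have h00 := hg0 i0
    rw [huz] at h00
    have habs0 : |xh i0| = a := by
      have h6 := huz
      simp only [htdef] at h6
      exact h6
    rcases (abs_eq (le_of_lt ha)).mp habs0 with h | h
    · show xh i0 = z i0 - lam
      rw [← hadef]; exact h
    · exfalso
      rw [h, hz0] at h00
      have hexpand : (a + lam - -a) ^ 2 - (a + lam - a) ^ 2 = 4 * a ^ 2 + 4 * (a * lam) := by
        ring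
      linarith only [h00, hexpand, pow_pos ha 2, mul_pos ha hlam]
  · intro i hi
    apply hzero
    rw [hmemA]
    intro he
    rw [he] at hi
    simp [hi0] at hi
end

section
/- Let γ ≥ 0, and let x be partitioned into m non-overlapping sub-groups x = (x^{(1)}, …, x^{(m)}) with x^{(i)} ∈ ℝ^{n_i}. Then the hybrid penalty P̃_γ(x) = P_γ(w), where w ∈ ℝ^m is given by w_i = ‖x^{(i)}‖₂, satisfies P̃_γ(x) = (γ/2)·(‖x‖_{2,1}² − ‖x‖₂²) + ‖x‖_{2,1}, where ‖x‖_{2,1} = ∑_{i=1}^{m} ‖x^{(i)}‖₂; and P̃_γ is γ-weakly convex, i.e., x ↦ (γ/2)·‖x‖₂² + P̃_γ(x) is convex. -/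
open Finset

lemma two_mul_sum_Ioi (n : ℕ) (w : Fin n → ℝ) :
    2 * ∑ i : Fin n, ∑ j ∈ Finset.Ioi i, w i * w j =
      (∑ i : Fin n, w i) ^ 2 - ∑ i : Fin n, w i ^ 2 := by
  have h := Finset.sum_sum_Ioi_add_eq_sum_sum_off_diag (fun i j : Fin n => w i * w j)
  have hsq : (∑ i : Fin n, w i) ^ 2 = ∑ i : Fin n, ∑ j : Fin n, w i * w j := by
    rw [sq, Finset.sum_mul_sum]
  have hsplit : ∀ i : Fin n, ∑ j : Fin n, w i * w j =
      w i ^ 2 + ∑ j ∈ ({i}ᶜ : Finset (Fin n)), w j * w i := by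
    intro i
    have h0 := Finset.sum_compl_add_sum ({i} : Finset (Fin n)) (fun j => w i * w j)
    simp only [Finset.sum_singleton] at h0
    rw [← h0, sq]
    have h1 : ∑ j ∈ ({i}ᶜ : Finset (Fin n)), w i * w j
        = ∑ j ∈ ({i}ᶜ : Finset (Fin n)), w j * w i :=
      Finset.sum_congr rfl fun j _ => mul_comm _ _
    rw [h1]; ring
  have h2 : ∑ i : Fin n, ∑ j ∈ Finset.Ioi i, (w j * w i + w i * w j)
      = 2 * ∑ i : Fin n, ∑ j ∈ Finset.Ioi i, w i * w j := by
    rw [two_mul, ← Finset.sum_add_distrib]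
    refine Finset.sum_congr rfl fun i _ => ?_
    rw [← Finset.sum_add_distrib]
    exact Finset.sum_congr rfl fun j _ => by ring
  have h3 : ∑ i : Fin n, ∑ j : Fin n, w i * w j =
      ∑ i : Fin n, w i ^ 2 + ∑ i : Fin n, ∑ j ∈ ({i}ᶜ : Finset (Fin n)), w j * w i := by
    rw [← Finset.sum_add_distrib]
    exact Finset.sum_congr rfl fun i _ => hsplit i
  have h' : ∑ i : Fin n, ∑ j ∈ Finset.Ioi i, (w j * w i + w i * w j)
      = ∑ i : Fin n, ∑ j ∈ ({i}ᶜ : Finset (Fin n)), w j * w i := by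
    rw [h]
  linear_combination -h2 + h' - h3 - hsq

lemma hybrid_eq (m : ℕ) (γ : ℝ) (nn : Fin m → ℕ)
    (x : (i : Fin m) → Fin (nn i) → ℝ) :
    P m γ (fun i => Real.sqrt (∑ j, (x i j) ^ 2)) =
      γ / 2 * ((∑ i : Fin m, Real.sqrt (∑ j, (x i j) ^ 2)) ^ 2 -
          ∑ i : Fin m, ∑ j, (x i j) ^ 2) +
        ∑ i : Fin m, Real.sqrt (∑ j, (x i j) ^ 2) := by
  set w : Fin m → ℝ := fun i => Real.sqrt (∑ j, (x i j) ^ 2) with hw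
  have habs : ∀ i, |w i| = w i := fun i => abs_of_nonneg (Real.sqrt_nonneg _)
  have hsq : ∀ i, w i ^ 2 = ∑ j, (x i j) ^ 2 := fun i =>
    Real.sq_sqrt (Finset.sum_nonneg fun j _ => sq_nonneg _)
  have key := two_mul_sum_Ioi m w
  unfold P
  simp only [habs]
  have hsum : ∑ i : Fin m, ∑ j, (x i j) ^ 2 = ∑ i : Fin m, w i ^ 2 :=
    Finset.sum_congr rfl fun i _ => (hsq i).symm
  rw [hsum]
  have hS : ∑ i : Fin m, ∑ j ∈ Finset.Ioi i, w i * w j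
      = ((∑ i : Fin m, w i) ^ 2 - ∑ i : Fin m, w i ^ 2) / 2 := by linarith
  rw [hS]; ring

lemma convexOn_sum_univ {ι E : Type*} [Fintype ι] [AddCommMonoid E] [Module ℝ E]
    (f : ι → E → ℝ) (h : ∀ i, ConvexOn ℝ Set.univ (f i)) :
    ConvexOn ℝ Set.univ (fun x => ∑ i : ι, f i x) := by
  classical
  induction (Finset.univ : Finset ι) using Finset.cons_induction with
  | empty => simpa using convexOn_const (0 : ℝ) convex_univ
  | cons a s ha ih =>
    simp only [Finset.sum_cons]
    exact (h a).add ih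

/-- Sec. II-E: the hybrid penalty equals
`(gamma/2)(‖x‖_{2,1}^2 - ‖x‖_2^2) + ‖x‖_{2,1}` and is `gamma`-weakly convex. -/
theorem hybrid_penalty (m : ℕ) (γ : ℝ) (hγ : 0 ≤ γ) (nn : Fin m → ℕ) :
    (∀ x : (i : Fin m) → Fin (nn i) → ℝ,
      P m γ (fun i => Real.sqrt (∑ j, (x i j) ^ 2)) =
        γ / 2 * ((∑ i : Fin m, Real.sqrt (∑ j, (x i j) ^ 2)) ^ 2 -
            ∑ i : Fin m, ∑ j, (x i j) ^ 2) +
          ∑ i : Fin m, Real.sqrt (∑ j, (x i j) ^ 2)) ∧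
    ConvexOn ℝ Set.univ (fun x : (i : Fin m) → Fin (nn i) → ℝ =>
      γ / 2 * ∑ i : Fin m, ∑ j, (x i j) ^ 2 +
        P m γ (fun i => Real.sqrt (∑ j, (x i j) ^ 2))) := by
  refine ⟨fun x => hybrid_eq m γ nn x, ?_⟩
  set g : ((i : Fin m) → Fin (nn i) → ℝ) → ℝ :=
    fun x => ∑ i : Fin m, Real.sqrt (∑ j, (x i j) ^ 2) with hg
  have hfun : (fun x : (i : Fin m) → Fin (nn i) → ℝ =>
      γ / 2 * ∑ i : Fin m, ∑ j, (x i j) ^ 2 +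
        P m γ (fun i => Real.sqrt (∑ j, (x i j) ^ 2)))
      = fun x => γ / 2 * (g x) ^ 2 + g x := by
    funext x
    rw [hybrid_eq m γ nn x]
    ring
  rw [hfun]
  -- g is convex: sum of norms composed with linear projections
  have hgi : ∀ i : Fin m, ConvexOn ℝ Set.univ
      (fun x : (i : Fin m) → Fin (nn i) → ℝ => Real.sqrt (∑ j, (x i j) ^ 2)) := by
    intro i
    set L : ((i : Fin m) → Fin (nn i) → ℝ) →ₗ[ℝ] EuclideanSpace ℝ (Fin (nn i)) :=
      (WithLp.linearEquiv 2 ℝ (Fin (nn i) → ℝ)).symm.toLinearMap ∘ₗ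
        LinearMap.proj i with hL
    have h := (convexOn_norm (convex_univ (E := EuclideanSpace ℝ (Fin (nn i))))).comp_linearMap L
    have heq : (fun x : (i : Fin m) → Fin (nn i) → ℝ => Real.sqrt (∑ j, (x i j) ^ 2))
        = (norm ∘ ⇑L) := by
      funext x
      simp only [Function.comp_apply]
      rw [EuclideanSpace.norm_eq]
      congr 1
      refine Finset.sum_congr rfl fun j _ => ?_
      rw [Real.norm_eq_abs, sq_abs]
      rfl
    rw [heq]
    simpa using h
  have hgconv : ConvexOn ℝ Set.univ g :=
    convexOn_sum_univ _ hgi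
  have hgnn : ∀ x : (i : Fin m) → Fin (nn i) → ℝ, 0 ≤ g x :=
    fun x => Finset.sum_nonneg fun i _ => Real.sqrt_nonneg _
  have hsq : ConvexOn ℝ Set.univ (fun x => (g x) ^ 2) := by
    refine ⟨convex_univ, fun x _ y _ a b ha hb hab => ?_⟩
    have h1 : g (a • x + b • y) ≤ a * g x + b * g y := by
      have := hgconv.2 (Set.mem_univ x) (Set.mem_univ y) ha hb hab
      simpa [smul_eq_mul] using this
    have h1' : 0 ≤ g (a • x + b • y) := hgnn _
    have h2 : (a * g x + b * g y) ^ 2 ≤ a * g x ^ 2 + b * g y ^ 2 := by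
      have := (Even.convexOn_pow (𝕜 := ℝ) (even_two)).2
        (Set.mem_univ (g x)) (Set.mem_univ (g y)) ha hb hab
      simpa [smul_eq_mul] using this
    have h3 : g (a • x + b • y) ^ 2 ≤ (a * g x + b * g y) ^ 2 :=
      pow_le_pow_left₀ h1' h1 2
    simp only [smul_eq_mul]
    linarith
  have h1 : ConvexOn ℝ Set.univ (fun x => γ / 2 * (g x) ^ 2) := by
    have := hsq.smul (c := γ / 2) (by positivity)
    simpa [smul_eq_mul] using this
  exact h1.add hgconv
end

section
/- Let λ ≥ 0, γ ≥ 0 with λ·γ < 1. Let z be partitioned into m non-overlapping sub-groups z^{(1)}, …, z^{(m)} with z^{(i)} ∈ ℝ^{n_i}, and let w ∈ ℝ^m be given by w_i = ‖z^{(i)}‖₂. Let x̂ be a minimizer of x ↦ (1/2)·‖x − z‖₂² + λ·P̃_γ(x), where P̃_γ(x) = P_γ(v) with v_i = ‖x^{(i)}‖₂, and let ŵ ∈ ℝ^m be a minimizer of u ↦ (1/2)·‖w − u‖₂² + λ·P_γ(u). Then for every i: if w_i > 0 then x̂^{(i)} = (ŵ_i / w_i) · z^{(i)}, and if w_i = 0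 then x̂^{(i)} = 0. -/
open Finset

lemma tri_split (m : ℕ) (i : Fin m) (d : Fin m → ℝ) :
    ∑ j ∈ Ioi i, d i * d j = ∑ j : Fin m, (if i < j then d i * d j else 0) := by
  rw [← Finset.sum_filter]
  apply Finset.sum_congr _ (fun j _ => rfl)
  ext j; simp

lemma sq_sum_eq (m : ℕ) (d : Fin m → ℝ) :
    (∑ i, d i)^2 = ∑ i, (d i)^2 + 2 * ∑ i : Fin m, ∑ j ∈ Ioi i, d i * d j := by
  have key : ∀ i j : Fin m, d i * d j =
      (if i < j then d i * d j else 0) + (if j < i then d i * d j else 0)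
        + (if i = j then d i * d j else 0) := by
    intro i j
    rcases lt_trichotomy i j with h | h | h
    · simp [h, asymm h, h.ne]
    · simp [h, lt_irrefl]
    · simp [h, asymm h, h.ne']
  have e1 : (∑ i, d i)^2 = ∑ i : Fin m, ∑ j : Fin m, d i * d j := by
    rw [sq, Finset.sum_mul_sum]
  have hswap : ∑ i : Fin m, ∑ j : Fin m, (if j < i then d i * d j else 0)
      = ∑ i : Fin m, ∑ j : Fin m, (if i < j then d i * d j else 0) := by
    rw [Finset.sum_comm]
    exact Finset.sum_congr rfl fun i _ => Finset.sum_congr rfl fun j _ => by rw [mul_comm]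
  have hdiag : ∑ i : Fin m, ∑ j : Fin m, (if i = j then d i * d j else 0)
      = ∑ i : Fin m, (d i)^2 := by
    refine Finset.sum_congr rfl fun i _ => ?_
    simp [sq]
  have htri : ∀ i : Fin m, ∑ j : Fin m, (if i < j then d i * d j else 0)
      = ∑ j ∈ Ioi i, d i * d j := fun i => (tri_split m i d).symm
  calc (∑ i, d i)^2 = ∑ i : Fin m, ∑ j : Fin m, d i * d j := e1
    _ = ∑ i : Fin m, ∑ j : Fin m, ((if i < j then d i * d j else 0)
          + (if j < i then d i * d j else 0) + (if i = j then d i * d j else 0)) := by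
        exact Finset.sum_congr rfl fun i _ => Finset.sum_congr rfl fun j _ => key i j
    _ = ∑ i : Fin m, (∑ j : Fin m, (if i < j then d i * d j else 0)
          + ∑ j : Fin m, (if j < i then d i * d j else 0)
          + ∑ j : Fin m, (if i = j then d i * d j else 0)) := by
        exact Finset.sum_congr rfl fun i _ => by
          rw [Finset.sum_add_distrib, Finset.sum_add_distrib]
    _ = ∑ i : Fin m, ∑ j : Fin m, (if i < j then d i * d j else 0)
          + ∑ i : Fin m, ∑ j : Fin m, (if j < i then d i * d j else 0)
          + ∑ i : Fin m, ∑ j : Fin m, (if i = j then d i * d j else 0) := by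
        rw [Finset.sum_add_distrib, Finset.sum_add_distrib]
    _ = ∑ i : Fin m, (d i)^2 + 2 * ∑ i : Fin m, ∑ j ∈ Ioi i, d i * d j := by
        rw [hswap, hdiag]
        rw [Finset.sum_congr rfl fun i _ => htri i]
        ring

lemma P_nonneg_form (m : ℕ) (γ : ℝ) (u : Fin m → ℝ) (hu : ∀ i, 0 ≤ u i) :
    P m γ u = γ * (∑ i : Fin m, ∑ j ∈ Ioi i, u i * u j) + ∑ i, u i := by
  have h : ∀ i, |u i| = u i := fun i => abs_of_nonneg (hu i)
  simp only [P, h]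

lemma P_mono_s16 (m : ℕ) (γ : ℝ) (hγ : 0 ≤ γ) (u v : Fin m → ℝ) (h : ∀ i, |u i| ≤ |v i|) :
    P m γ u ≤ P m γ v := by
  unfold P
  have h1 : ∀ i : Fin m, ∑ j ∈ Ioi i, |u i| * |u j| ≤ ∑ j ∈ Ioi i, |v i| * |v j| :=
    fun i => Finset.sum_le_sum fun j _ =>
      mul_le_mul (h i) (h j) (abs_nonneg _) ((abs_nonneg _).trans (h i))
  exact add_le_add (mul_le_mul_of_nonneg_left (Finset.sum_le_sum fun i _ => h1 i) hγ)
    (Finset.sum_le_sum fun i _ => h i)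

lemma uniq (m : ℕ) (lam γ : ℝ) (hlam : 0 ≤ lam) (hγ : 0 ≤ γ) (hlγ : lam * γ < 1)
    (w a b : Fin m → ℝ) (ha : ∀ i, 0 ≤ a i) (hb : ∀ i, 0 ≤ b i)
    (hminb : ∀ u : Fin m → ℝ,
      (1/2) * ∑ i, (w i - b i)^2 + lam * P m γ b ≤ (1/2) * ∑ i, (w i - u i)^2 + lam * P m γ u)
    (heq : (1/2) * ∑ i, (w i - a i)^2 + lam * P m γ a
      = (1/2) * ∑ i, (w i - b i)^2 + lam * P m γ b) :
    ∀ i, a i = b i := by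
  have hPa : P m γ a = γ * (∑ i : Fin m, ∑ j ∈ Ioi i, a i * a j) + ∑ i, a i :=
    P_nonneg_form m γ a ha
  have hPb : P m γ b = γ * (∑ i : Fin m, ∑ j ∈ Ioi i, b i * b j) + ∑ i, b i :=
    P_nonneg_form m γ b hb
  have hPmid : P m γ (fun i => (a i + b i)/2)
      = γ * (∑ i : Fin m, ∑ j ∈ Ioi i, ((a i + b i)/2) * ((a j + b j)/2))
        + ∑ i, (a i + b i)/2 :=
    P_nonneg_form m γ _ (fun i => div_nonneg (add_nonneg (ha i) (hb i)) (by norm_num))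
  have hm' : (1/2) * ∑ i, (w i - b i)^2 + lam * P m γ b ≤
      (1/2) * ∑ i, (w i - (a i + b i)/2)^2 + lam * P m γ (fun i => (a i + b i)/2) :=
    hminb (fun i => (a i + b i)/2)
  rw [hPb, hPmid] at hm'
  have hq : ∑ i, (w i - (a i + b i)/2)^2
      = (∑ i, (w i - a i)^2)/2 + (∑ i, (w i - b i)^2)/2 - (1/4) * ∑ i, (a i - b i)^2 := by
    have hpt : ∀ i : Fin m, (w i - (a i + b i)/2)^2
        = (w i - a i)^2/2 + (w i - b i)^2/2 - (1/4)*(a i - b i)^2 := fun i => by ring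
    simp only [hpt]
    rw [Finset.sum_sub_distrib, Finset.sum_add_distrib, ← Finset.sum_div, ← Finset.sum_div,
      ← Finset.mul_sum]
  have hl : ∑ i, (a i + b i)/2 = (∑ i, a i)/2 + (∑ i, b i)/2 := by
    rw [← Finset.sum_div, Finset.sum_add_distrib, add_div]
  have hc : ∑ i : Fin m, ∑ j ∈ Ioi i, ((a i + b i)/2) * ((a j + b j)/2)
      = (∑ i : Fin m, ∑ j ∈ Ioi i, a i * a j)/2 + (∑ i : Fin m, ∑ j ∈ Ioi i, b i * b j)/2
        - (1/4) * ∑ i : Fin m, ∑ j ∈ Ioi i, (a i - b i) * (a j - b j) := by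
    have hpt : ∀ i j : Fin m, ((a i + b i)/2) * ((a j + b j)/2)
        = (a i * a j)/2 + (b i * b j)/2 - (1/4)*((a i - b i)*(a j - b j)) := fun i j => by ring
    simp only [hpt]
    simp only [Finset.sum_sub_distrib, Finset.sum_add_distrib, ← Finset.sum_div,
      ← Finset.mul_sum]
  rw [hq, hl, hc] at hm'
  have heq' := heq
  rw [hPa, hPb] at heq'
  have hkey : (∑ i, (a i - b i)^2)
      + 2*lam*γ*(∑ i : Fin m, ∑ j ∈ Ioi i, (a i - b i)*(a j - b j)) ≤ 0 := by
    nlinarith [hm', heq']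
  have hsq : (∑ i, (a i - b i))^2 = ∑ i, (a i - b i)^2
      + 2 * ∑ i : Fin m, ∑ j ∈ Ioi i, (a i - b i) * (a j - b j) :=
    sq_sum_eq m (fun i => a i - b i)
  have hS0 : 0 ≤ ∑ i, (a i - b i)^2 := Finset.sum_nonneg fun i _ => sq_nonneg _
  have hlγ0 : 0 ≤ lam*γ := mul_nonneg hlam hγ
  have hSle : ∑ i, (a i - b i)^2 ≤ 0 := by
    nlinarith [hkey, hsq, hS0, hlγ0, sq_nonneg (∑ i, (a i - b i)), hlγ]
  have hz := (Finset.sum_eq_zero_iff_of_nonneg (fun i (_ : i ∈ univ) => sq_nonneg (a i - b i))).1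
    (le_antisymm hSle hS0)
  intro i
  have h1 : (a i - b i)^2 = 0 := hz i (mem_univ i)
  have h2 : a i - b i = 0 := pow_eq_zero_iff (two_ne_zero) |>.1 h1
  linarith

lemma sum_sub_sq (n : ℕ) (c : ℝ) (x z : Fin n → ℝ) :
    ∑ j, (x j - c * z j)^2
      = ∑ j, (x j)^2 - 2*c*(∑ j, x j * z j) + c^2 * ∑ j, (z j)^2 := by
  have hpt : ∀ j : Fin n, (x j - c*z j)^2
      = (x j)^2 - 2*c*(x j * z j) + c^2*(z j)^2 := fun j => by ring
  simp only [hpt]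
  rw [Finset.sum_add_distrib, Finset.sum_sub_distrib, ← Finset.mul_sum, ← Finset.mul_sum]

lemma sum_sub_sq1 (n : ℕ) (x z : Fin n → ℝ) :
    ∑ j, (x j - z j)^2 = ∑ j, (x j)^2 - 2*(∑ j, x j * z j) + ∑ j, (z j)^2 := by
  have hpt : ∀ j : Fin n, (x j - z j)^2
      = (x j)^2 - 2*(x j * z j) + (z j)^2 := fun j => by ring
  simp only [hpt]
  rw [Finset.sum_add_distrib, Finset.sum_sub_distrib, ← Finset.mul_sum]

lemma cs_sqrt (n : ℕ) (x z : Fin n → ℝ) :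
    ∑ j, x j * z j ≤ Real.sqrt (∑ j, (x j)^2) * Real.sqrt (∑ j, (z j)^2) := by
  have h := Finset.sum_mul_sq_le_sq_mul_sq Finset.univ x z
  calc ∑ j, x j * z j ≤ |∑ j, x j * z j| := le_abs_self _
    _ = Real.sqrt ((∑ j, x j * z j)^2) := (Real.sqrt_sq_eq_abs _).symm
    _ ≤ Real.sqrt ((∑ j, (x j)^2) * ∑ j, (z j)^2) := Real.sqrt_le_sqrt h
    _ = _ := Real.sqrt_mul (Finset.sum_nonneg fun j _ => sq_nonneg _) _

lemma dist_ge (n : ℕ) (x z : Fin n → ℝ) :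
    (Real.sqrt (∑ j, (x j)^2) - Real.sqrt (∑ j, (z j)^2))^2 ≤ ∑ j, (x j - z j)^2 := by
  have hx : (0:ℝ) ≤ ∑ j, (x j)^2 := Finset.sum_nonneg fun j _ => sq_nonneg _
  have hz : (0:ℝ) ≤ ∑ j, (z j)^2 := Finset.sum_nonneg fun j _ => sq_nonneg _
  nlinarith [cs_sqrt n x z, Real.sq_sqrt hx, Real.sq_sqrt hz, sum_sub_sq1 n x z]

/-- Prop. 7: the threshold of the hybrid penalty rescales each sub-group of `z` by
`wh_i / w_i`, where `wh` is the threshold of the vector `w` of sub-group norms. -/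
theorem hybrid_thold (m : ℕ) (lam γ : ℝ) (hlam : 0 ≤ lam) (hγ : 0 ≤ γ)
    (hlγ : lam * γ < 1) (nn : Fin m → ℕ)
    (z : (i : Fin m) → Fin (nn i) → ℝ) (w : Fin m → ℝ)
    (hw : ∀ i, w i = Real.sqrt (∑ j, (z i j) ^ 2))
    (xh : (i : Fin m) → Fin (nn i) → ℝ)
    (hxh : ∀ x : (i : Fin m) → Fin (nn i) → ℝ,
      (1 / 2) * ∑ i : Fin m, ∑ j, (xh i j - z i j) ^ 2 +
          lam * P m γ (fun i => Real.sqrt (∑ j, (xh i j) ^ 2)) ≤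
        (1 / 2) * ∑ i : Fin m, ∑ j, (x i j - z i j) ^ 2 +
          lam * P m γ (fun i => Real.sqrt (∑ j, (x i j) ^ 2)))
    (wh : Fin m → ℝ)
    (hwh : ∀ u : Fin m → ℝ,
      (1 / 2) * ∑ i : Fin m, (w i - wh i) ^ 2 + lam * P m γ wh ≤
        (1 / 2) * ∑ i : Fin m, (w i - u i) ^ 2 + lam * P m γ u) :
    ∀ i : Fin m,
      (0 < w i → ∀ j, xh i j = (wh i / w i) * z i j) ∧
      (w i = 0 → ∀ j, xh i j = 0) := by
  have hw0 : ∀ i, 0 ≤ w i := fun i => (hw i) ▸ Real.sqrt_nonneg _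
  have hzsum : ∀ i, ∑ j, (z i j)^2 = (w i)^2 := fun i => by
    rw [hw i, Real.sq_sqrt (Finset.sum_nonneg fun j _ => sq_nonneg _)]
  have hz0 : ∀ i, w i = 0 → ∀ j, z i j = 0 := by
    intro i h0 j
    have h1 : ∑ j, (z i j)^2 = 0 := by rw [hzsum i, h0]; ring
    have h2 := (Finset.sum_eq_zero_iff_of_nonneg
      (fun j (_ : j ∈ univ) => sq_nonneg (z i j))).1 h1 j (mem_univ j)
    exact pow_eq_zero_iff two_ne_zero |>.1 h2
  -- wh is zero where w is zero
  have hwh0 : ∀ i, w i = 0 → wh i = 0 := by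
    intro i h0
    have hmono : P m γ (Function.update wh i 0) ≤ P m γ wh := by
      refine P_mono_s16 m γ hγ _ _ ?_
      intro k
      rcases eq_or_ne k i with rfl | hk
      · simp
      · simp [Function.update_of_ne hk]
    have hfun : (fun k => (w k - Function.update wh i 0 k)^2)
        = Function.update (fun k => (w k - wh k)^2) i ((w i)^2) := by
      funext k
      rcases eq_or_ne k i with rfl | hk
      · simp
      · simp [Function.update_of_ne hk]
    have hsum : ∑ k, (w k - Function.update wh i 0 k)^2
        = (w i)^2 + ∑ k ∈ univ \ {i}, (w k - wh k)^2 := by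
      calc ∑ k, (w k - Function.update wh i 0 k)^2
          = ∑ k, Function.update (fun k => (w k - wh k)^2) i ((w i)^2) k := by
            exact Finset.sum_congr rfl fun k _ => congrFun hfun k
        _ = (w i)^2 + ∑ k ∈ univ \ {i}, (w k - wh k)^2 :=
            Finset.sum_update_of_mem (mem_univ i) _ _
    have herase : ∑ k ∈ univ \ {i}, (w k - wh k)^2
        = (∑ k, (w k - wh k)^2) - (w i - wh i)^2 := by
      rw [Finset.sum_sdiff_eq_sub (Finset.singleton_subset_iff.2 (mem_univ i)),
        Finset.sum_singleton]
    have h := hwh (Function.update wh i 0)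
    rw [hsum, herase, h0] at h
    have hP2 : lam * P m γ (Function.update wh i 0) ≤ lam * P m γ wh :=
      mul_le_mul_of_nonneg_left hmono hlam
    have hsq : (wh i)^2 ≤ 0 := by nlinarith [h, hP2]
    exact pow_eq_zero_iff two_ne_zero |>.1 (le_antisymm hsq (sq_nonneg _))
  -- wh nonneg where w positive
  have habs : ∀ i : Fin m, (w i - |wh i|)^2 ≤ (w i - wh i)^2 := fun i => by
    nlinarith [le_abs_self (wh i), hw0 i, sq_abs (wh i)]
  have hsumabs : ∑ i, (w i - |wh i|)^2 = ∑ i, (w i - wh i)^2 := by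
    have hP : P m γ (fun k => |wh k|) = P m γ wh := by simp [P, abs_abs]
    have h : (1/2) * ∑ i, (w i - wh i)^2 + lam * P m γ wh
        ≤ (1/2) * ∑ i, (w i - |wh i|)^2 + lam * P m γ (fun k => |wh k|) := hwh _
    rw [hP] at h
    have h2 : ∑ i, (w i - wh i)^2 ≤ ∑ i, (w i - |wh i|)^2 := by linarith
    exact le_antisymm (Finset.sum_le_sum fun i _ => habs i) h2
  have hwhnn : ∀ i, 0 ≤ wh i := by
    intro i
    rcases (hw0 i).lt_or_eq with hpos | h0
    · have hz' : ∑ k, ((w k - wh k)^2 - (w k - |wh k|)^2) = 0 := by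
        rw [Finset.sum_sub_distrib]
        linarith [hsumabs]
      have he := (Finset.sum_eq_zero_iff_of_nonneg
        (fun k (_ : k ∈ univ) => sub_nonneg.2 (habs k))).1 hz' i (mem_univ i)
      nlinarith [le_abs_self (wh i), sq_abs (wh i), abs_nonneg (wh i), he, hpos]
    · exact le_of_eq (hwh0 i h0.symm).symm
  -- facts about the candidate x* i j = (wh i / w i) * z i j
  have hxs_sum : ∀ i, ∑ j, (wh i / w i * z i j)^2 = (wh i)^2 := by
    intro i
    rcases eq_or_ne (w i) 0 with h0 | h0
    · rw [hwh0 i h0, Finset.sum_eq_zero fun j _ => by rw [hz0 i h0 j]; ring]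
      ring
    · have e : ∑ j, (wh i / w i * z i j)^2 = (wh i / w i)^2 * ∑ j, (z i j)^2 := by
        rw [Finset.mul_sum]; exact Finset.sum_congr rfl fun j _ => by ring
      rw [e, hzsum i, ← mul_pow, div_mul_cancel₀ _ h0]
  have hxs_norm : ∀ i, Real.sqrt (∑ j, (wh i / w i * z i j)^2) = wh i := fun i => by
    rw [hxs_sum i, Real.sqrt_sq (hwhnn i)]
  have hxs_dist : ∀ i, ∑ j, (wh i / w i * z i j - z i j)^2 = (w i - wh i)^2 := by
    intro i
    rcases eq_or_ne (w i) 0 with h0 | h0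
    · rw [h0, hwh0 i h0, Finset.sum_eq_zero fun j _ => by rw [hz0 i h0 j]; ring]
      ring
    · have e : ∑ j, (wh i / w i * z i j - z i j)^2
          = (wh i / w i - 1)^2 * ∑ j, (z i j)^2 := by
        rw [Finset.mul_sum]; exact Finset.sum_congr rfl fun j _ => by ring
      have e2 : (wh i / w i - 1) * w i = wh i - w i := by field_simp
      rw [e, hzsum i, ← mul_pow, e2]
      ring
  -- Cauchy-Schwarz per group
  have hcs : ∀ i, (w i - Real.sqrt (∑ j, (xh i j)^2))^2 ≤ ∑ j, (xh i j - z i j)^2 := by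
    intro i
    have h := dist_ge (nn i) (xh i) (z i)
    rw [← hw i] at h
    calc (w i - Real.sqrt (∑ j, (xh i j)^2))^2
        = (Real.sqrt (∑ j, (xh i j)^2) - w i)^2 := by ring
      _ ≤ _ := h
  -- the chain of inequalities
  have hB' : (1/2) * ∑ i : Fin m, ∑ j, (xh i j - z i j)^2
        + lam * P m γ (fun i => Real.sqrt (∑ j, (xh i j)^2))
      ≤ (1/2) * ∑ i : Fin m, (w i - wh i)^2 + lam * P m γ wh := by
    refine le_trans (hxh (fun i j => wh i / w i * z i j)) (le_of_eq ?_)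
    simp only [hxs_dist, hxs_norm]
  have hC' : (1/2) * ∑ i : Fin m, (w i - wh i)^2 + lam * P m γ wh
      ≤ (1/2) * ∑ i : Fin m, (w i - Real.sqrt (∑ j, (xh i j)^2))^2
        + lam * P m γ (fun i => Real.sqrt (∑ j, (xh i j)^2)) := hwh _
  have hA : ∑ i : Fin m, (w i - Real.sqrt (∑ j, (xh i j)^2))^2
      ≤ ∑ i : Fin m, ∑ j, (xh i j - z i j)^2 := Finset.sum_le_sum fun i _ => hcs i
  have hGvEq : (1/2) * ∑ i : Fin m, (w i - Real.sqrt (∑ j, (xh i j)^2))^2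
        + lam * P m γ (fun i => Real.sqrt (∑ j, (xh i j)^2))
      = (1/2) * ∑ i : Fin m, (w i - wh i)^2 + lam * P m γ wh := by
    linarith [hB', hC', hA]
  have hFEq : ∑ i : Fin m, ∑ j, (xh i j - z i j)^2
      = ∑ i : Fin m, (w i - Real.sqrt (∑ j, (xh i j)^2))^2 := by
    linarith [hB', hC', hA]
  have hveq : ∀ i, Real.sqrt (∑ j, (xh i j)^2) = wh i :=
    uniq m lam γ hlam hγ hlγ w (fun i => Real.sqrt (∑ j, (xh i j)^2)) wh
      (fun i => Real.sqrt_nonneg _) hwhnn hwh hGvEq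
  have hterm : ∀ i, ∑ j, (xh i j - z i j)^2
      = (w i - Real.sqrt (∑ j, (xh i j)^2))^2 := by
    have hz' : ∑ i : Fin m, (∑ j, (xh i j - z i j)^2
        - (w i - Real.sqrt (∑ j, (xh i j)^2))^2) = 0 := by
      rw [Finset.sum_sub_distrib]
      linarith [hFEq]
    intro i
    have he := (Finset.sum_eq_zero_iff_of_nonneg
      (fun k (_ : k ∈ univ) => sub_nonneg.2 (hcs k))).1 hz' i (mem_univ i)
    linarith [he]
  intro i
  constructor
  · intro hpos j
    have hvwh := hveq i
    have hxsum : ∑ j, (xh i j)^2 = (wh i)^2 := by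
      rw [← hvwh, Real.sq_sqrt (Finset.sum_nonneg fun j _ => sq_nonneg _)]
    have ht := hterm i
    rw [hvwh, sum_sub_sq1 (nn i) (xh i) (z i), hxsum, hzsum i] at ht
    have hS : ∑ j, xh i j * z i j = w i * wh i := by linear_combination (-1/2) * ht
    have hzero : ∑ j, (xh i j - wh i / w i * z i j)^2 = 0 := by
      rw [sum_sub_sq (nn i) (wh i / w i) (xh i) (z i), hxsum, hS, hzsum i]
      field_simp
      ring
    have h1 := (Finset.sum_eq_zero_iff_of_nonneg
      (fun k (_ : k ∈ univ) => sq_nonneg (xh i k - wh i / w i * z i k))).1 hzero j (mem_univ j)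
    have h2 : xh i j - wh i / w i * z i j = 0 := pow_eq_zero_iff two_ne_zero |>.1 h1
    linarith
  · intro h0 j
    have hv0 : Real.sqrt (∑ j, (xh i j)^2) = 0 := (hveq i).trans (hwh0 i h0)
    have hnn : (0:ℝ) ≤ ∑ j, (xh i j)^2 := Finset.sum_nonneg fun j _ => sq_nonneg _
    have hs : ∑ j, (xh i j)^2 = 0 := by
      have h2 := Real.sq_sqrt hnn
      rw [hv0] at h2
      simpa using h2.symm
    have h1 := (Finset.sum_eq_zero_iff_of_nonneg
      (fun k (_ : k ∈ univ) => sq_nonneg (xh i k))).1 hs j (mem_univ j)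
    exact pow_eq_zero_iff two_ne_zero |>.1 h1
end

section
/- Let λ ≥ 0, γ ≥ 0, α > 0 with α·λ·γ < 1, and let H : ℝ^{g·w} → ℝ^M be a linear map with operator norm ‖H‖ satisfying α·‖H‖² ≤ 1. For y ∈ ℝ^M define D(x) = (1/2)·‖y − H x‖₂² + λ·𝐏_γ(x). Fix x ∈ ℝ^{g·w} and let x⁺ be a minimizer of u ↦ (1/2)·‖u − (x − α·H*(H x − y))‖₂² + α·λ·𝐏_γ(u), where H* is the adjoint of H. Then D(x⁺) ≤ D(x); i.e., each forward-backward splitting iteration does not increase the cost. -/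
open Finset

/-- Each forward-backward splitting iteration does not increase the deconvolution cost
`D(x) = (1/2)‖y - Hx‖^2 + lam * P_gamma(x)` when `alpha*lam*gamma < 1` and
`alpha * ‖H‖^2 ≤ 1`. -/
theorem fbs_decreases (g w M : ℕ) (lam γ α : ℝ) (hlam : 0 ≤ lam) (hγ : 0 ≤ γ)
    (hα : 0 < α) (hαlγ : α * lam * γ < 1)
    (H : (Fin g → Fin w → ℝ) →ₗ[ℝ] (Fin M → ℝ))
    (Hadj : (Fin M → ℝ) →ₗ[ℝ] (Fin g → Fin w → ℝ))
    (hadj : ∀ (x : Fin g → Fin w → ℝ) (u : Fin M → ℝ),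
      ∑ k : Fin M, H x k * u k = ∑ j : Fin g, ∑ i : Fin w, x j i * Hadj u j i)
    (hnorm : ∀ x : Fin g → Fin w → ℝ,
      α * ∑ k : Fin M, (H x k) ^ 2 ≤ ∑ j : Fin g, ∑ i : Fin w, (x j i) ^ 2)
    (y : Fin M → ℝ) (x xp : Fin g → Fin w → ℝ)
    (hxp : ∀ u : Fin g → Fin w → ℝ,
      (1 / 2) * ∑ j : Fin g, ∑ i : Fin w,
          (xp j i - (x j i - α * Hadj (H x - y) j i)) ^ 2 +
        α * lam * ∑ j : Fin g, P w γ (xp j) ≤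
      (1 / 2) * ∑ j : Fin g, ∑ i : Fin w,
          (u j i - (x j i - α * Hadj (H x - y) j i)) ^ 2 +
        α * lam * ∑ j : Fin g, P w γ (u j)) :
    (1 / 2) * ∑ k : Fin M, (y k - H xp k) ^ 2 + lam * ∑ j : Fin g, P w γ (xp j) ≤
    (1 / 2) * ∑ k : Fin M, (y k - H x k) ^ 2 + lam * ∑ j : Fin g, P w γ (x j) := by
  -- abbreviations
  set Pxp := ∑ j : Fin g, P w γ (xp j) with hPxp
  set Px := ∑ j : Fin g, P w γ (x j) with hPx
  set A := ∑ j : Fin g, ∑ i : Fin w, (xp j i - x j i) ^ 2 with hA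
  set Bv := ∑ k : Fin M, (H xp k - H x k) ^ 2 with hBv
  set Cv := ∑ k : Fin M, (H xp k - H x k) * (H x k - y k) with hCv
  set Q := ∑ j : Fin g, ∑ i : Fin w, (Hadj (H x - y) j i) ^ 2 with hQ
  set S1 := ∑ k : Fin M, (y k - H x k) ^ 2 with hS1
  -- adjoint identity
  have hC : ∑ j : Fin g, ∑ i : Fin w, (xp j i - x j i) * Hadj (H x - y) j i = Cv := by
    have h := hadj (xp - x) (H x - y)
    rw [map_sub] at h
    simp only [Pi.sub_apply] at h
    rw [hCv, ← h]
  -- norm bound at xp - x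
  have hB : α * Bv ≤ A := by
    have h := hnorm (xp - x)
    rw [map_sub] at h
    simp only [Pi.sub_apply] at h
    rw [hBv, hA]
    exact h
  -- expand hxp at u = x
  have h1 := hxp x
  have e1 : ∑ j : Fin g, ∑ i : Fin w, (xp j i - (x j i - α * Hadj (H x - y) j i)) ^ 2
      = A + 2 * α * (∑ j : Fin g, ∑ i : Fin w, (xp j i - x j i) * Hadj (H x - y) j i)
        + α ^ 2 * Q := by
    rw [hA, hQ, Finset.mul_sum, Finset.mul_sum, ← Finset.sum_add_distrib,
      ← Finset.sum_add_distrib]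
    refine Finset.sum_congr rfl fun j _ => ?_
    rw [Finset.mul_sum, Finset.mul_sum, ← Finset.sum_add_distrib, ← Finset.sum_add_distrib]
    refine Finset.sum_congr rfl fun i _ => ?_
    ring
  have e2 : ∑ j : Fin g, ∑ i : Fin w, (x j i - (x j i - α * Hadj (H x - y) j i)) ^ 2
      = α ^ 2 * Q := by
    rw [hQ, Finset.mul_sum]
    refine Finset.sum_congr rfl fun j _ => ?_
    rw [Finset.mul_sum]
    refine Finset.sum_congr rfl fun i _ => ?_
    ring
  rw [e1, e2, hC] at h1
  -- expand the goal's first sum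
  have e3 : ∑ k : Fin M, (y k - H xp k) ^ 2 = S1 + 2 * Cv + Bv := by
    rw [hS1, hBv, hCv, Finset.mul_sum, ← Finset.sum_add_distrib, ← Finset.sum_add_distrib]
    refine Finset.sum_congr rfl fun k _ => ?_
    ring
  rw [e3]
  have key : α * ((1 / 2) * (S1 + 2 * Cv + Bv) + lam * Pxp)
      ≤ α * ((1 / 2) * S1 + lam * Px) := by nlinarith [h1, hB]
  exact le_of_mul_le_mul_left key hα
end
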